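/- arXiv:1310.2194 — 5 statements merged into one kernel-verified Lean document; each statement's English description precedes it below -/
import Mathlib

section
/- Consider AE jigsaw percolation on a sequence of connected puzzle graphs G_puz with N vertices and maximum degree at most D = D(N), where the people graph is Erdős–Rényi with edge probability p = μ/(D log N) for a constant μ > 0. Set η = limsup_{N→∞} (log D / log N). If μ < min{2e^{-(3+η)}, e^{-(5+η)/2}}, then P_p(Solve) → 0 as N → ∞. -/
open scoped Classical
open Filter

noncomputable section

namespace JigsawPerc

variable {V : Type*}

/-- Number of `G`-neighbors of `v` inside `S` (not including `v`). -/
def nbrCount (G : SimpleGraph V) (v : V) (S : Set V) : ℕ :=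
  {u ∈ S | G.Adj v u}.ncard

/-- One-directional merging condition, (J1)–(J3), from part `Wi` toward part `Wj`. -/
def LinkedDir (Gpuz Gppl : SimpleGraph V) (σ τ : ℕ) (θ : ℕ∞) (Wi Wj : Set V) : Prop :=
  (∃ v₁ ∈ Wi, ∃ v₂ ∈ Wj, Gppl.Adj v₁ v₂ ∧ Gpuz.Adj v₁ v₂) ∨
  (∃ v₁ ∈ Wi, θ ≤ (nbrCount Gpuz v₁ Wj : ℕ∞)) ∨
  (∃ v₁ ∈ Wi, σ ≤ nbrCount Gppl v₁ Wj ∧ τ ≤ nbrCount Gpuz v₁ Wj)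

/-- Two distinct parts are linked when (J1), (J2) or (J3) holds in one of the two directions. -/
def Linked (Gpuz Gppl : SimpleGraph V) (σ τ : ℕ) (θ : ℕ∞) (Wi Wj : Set V) : Prop :=
  Wi ≠ Wj ∧ (LinkedDir Gpuz Gppl σ τ θ Wi Wj ∨ LinkedDir Gpuz Gppl σ τ θ Wj Wi)

/-- One step of the jigsaw dynamics: merge all parts lying in the same connected
component of the `Linked` graph on parts. -/
def step (Gpuz Gppl : SimpleGraph V) (σ τ : ℕ) (θ : ℕ∞) (P : Set (Set V)) : Set (Set V) :=
  { U | ∃ W ∈ P, U = ⋃₀ {W' | W' ∈ P ∧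
      Relation.EqvGen (fun A B => A ∈ P ∧ B ∈ P ∧ Linked Gpuz Gppl σ τ θ A B) W W'} }

/-- The partition at time `t`, started from the partition into singletons. -/
def partAt (Gpuz Gppl : SimpleGraph V) (σ τ : ℕ) (θ : ℕ∞) (t : ℕ) : Set (Set V) :=
  (step Gpuz Gppl σ τ θ)^[t] {S : Set V | ∃ v, S = {v}}

/-- The event that the puzzle is solved: at some time all vertices form one single part. -/
def Solve (Gpuz Gppl : SimpleGraph V) (σ τ : ℕ) (θ : ℕ∞) : Prop :=
  ∃ t, partAt Gpuz Gppl σ τ θ t = {Set.univ}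

/-- `A` is internally solved: jigsaw percolation on the induced subgraphs solves `A`. -/
def SolveIn (Gpuz Gppl : SimpleGraph V) (σ τ : ℕ) (θ : ℕ∞) (A : Set V) : Prop :=
  Solve (Gpuz.induce A) (Gppl.induce A) σ τ θ

/-- The people graph determined by a configuration of the off-diagonal edge indicators. -/
def graphOf (ω : {e : Sym2 V // ¬ e.IsDiag} → Bool) : SimpleGraph V :=
  SimpleGraph.fromEdgeSet {e | ∃ h : ¬ e.IsDiag, ω ⟨e, h⟩ = true}

/-- Probability, under the Erdős–Rényi measure with edge probability `p` on the vertex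
set `V`, of the people-graph event `A`. -/
def erProb [Fintype V] (p : ℝ) (A : SimpleGraph V → Prop) : ℝ :=
  ∑ ω : {e : Sym2 V // ¬ e.IsDiag} → Bool,
    if A (graphOf ω) then ∏ e, (if ω e then p else 1 - p) else 0

/-- Probability that jigsaw percolation with puzzle graph `Gpuz`, Erdős–Rényi people graph
with edge probability `p`, and thresholds `σ, τ, θ` solves the puzzle. -/
def solveProb [Fintype V] (Gpuz : SimpleGraph V) (σ τ : ℕ) (θ : ℕ∞) (p : ℝ) : ℝ :=
  erProb p fun Gppl => Solve Gpuz Gppl σ τ θ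

/-- The `d`-dimensional discrete torus on `ℤ_n^d`: nearest-neighbor adjacency with
periodic boundary conditions. -/
def torus (d n : ℕ) : SimpleGraph (Fin d → Fin n) :=
  SimpleGraph.fromRel fun x y =>
    ∃ i, (∀ j, j ≠ i → x j = y j) ∧ ((x i : ℕ) + 1) % n = (y i : ℕ)

/-- The ring (cycle) graph on `ℤ_n`. -/
def ring (n : ℕ) : SimpleGraph (Fin n) :=
  SimpleGraph.fromRel fun x y => ((x : ℕ) + 1) % n = (y : ℕ)

/-- `P(Poisson(x) ≥ σ) = e^{-x} ∑_{i=σ}^∞ x^i/i!`. -/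
def poissonTail (σ : ℕ) (x : ℝ) : ℝ :=
  Real.exp (-x) * ∑' i : ℕ, x ^ (σ + i) / (σ + i).factorial

/-- `g_σ(x) = -log P(Poisson(x) ≥ σ)`. -/
def gPois (σ : ℕ) (x : ℝ) : ℝ := -Real.log (poissonTail σ x)

/-- `λ_σ = ∫_0^∞ g_σ(x) dx`. -/
def lambdaC (σ : ℕ) : ℝ := ∫ x in Set.Ioi (0 : ℝ), gPois σ x

/-- `ν_σ = ∫_0^∞ -log(1 - exp(-x^{2σ+1}/σ!)) dx`. -/
def nuC (σ : ℕ) : ℝ :=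
  ∫ x in Set.Ioi (0 : ℝ), -Real.log (1 - Real.exp (-(x ^ (2 * σ + 1) / (σ.factorial : ℝ))))

/-!
Every part formed by the AE dynamics is certified: it carries a spanning tree of puzzle edges and
`|A| - 1` people edges, because two parts merge only along a link that supplies one puzzle edge
and one people edge between them. If the puzzle is solved, the first part of size at least
`m = ⌈log N⌉ + 1` is built by joining parts of size `< m` one at a time, so some certified set
has size `s ∈ [m, 2m)`. A union bound over such sets, their puzzle trees and their `s - 1` people
edges bounds `P_p(Solve)` by a sum of terms `N (eD)^(s-1) e^3 · C(C(s+1, 2), s-1) · p^(s-1)`; the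
count of trees comes from bond percolation of parameter `1/D`, whose open clusters at a fixed
vertex are disjoint events. With `p = μ/(D log N)` and `u = (s-1)/log N ∈ [1, 2 + o(1)]` a term is
`O(N exp(log N · u log(e²μu/2)))`. By convexity of `u ↦ u log(au)` the exponent stays below
`-(1 + δ) log N` once `log a < -1` and `2 log(2a) < -1`, that is `μ < 2e^(-3)` and
`μ < e^(-5/2)`, which the hypothesis gives since `η ≥ 0`.
-/

open scoped Topology

section Certificates

variable {V : Type*}

def Spans (F : Finset V) (T : Finset (Sym2 V)) : Prop :=
  ∀ x ∈ F, ∀ y ∈ F, Relation.ReflTransGen (fun a b => s(a, b) ∈ T) x y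

def IsTreeSized (G : SimpleGraph V) (F : Finset V) (T : Finset (Sym2 V)) : Prop :=
  ↑T ⊆ G.edgeSet ∧ T ⊆ F.sym2 ∧ T.card + 1 = F.card

def IsSpanningTree (G : SimpleGraph V) (F : Finset V) (T : Finset (Sym2 V)) : Prop :=
  IsTreeSized G F T ∧ Spans F T

/-- The invariant of the AE dynamics. The people edges are what costs probability; the puzzle
tree is what makes such sets few. -/
def IsCertified (Gpuz Gppl : SimpleGraph V) (A : Set V) : Prop :=
  ∃ F : Finset V, ↑F = A ∧ (∃ T, IsSpanningTree Gpuz F T) ∧ ∃ U, IsTreeSized Gppl F U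

lemma isSpanningTree_singleton (G : SimpleGraph V) (v : V) : IsSpanningTree G {v} ∅ := by
  refine ⟨⟨by simp, by simp, by simp⟩, ?_⟩
  rintro x hx y hy
  rw [Finset.mem_singleton.1 hx, Finset.mem_singleton.1 hy]

lemma isCertified_singleton (Gpuz Gppl : SimpleGraph V) (v : V) :
    IsCertified Gpuz Gppl {v} :=
  ⟨{v}, by simp, ⟨∅, isSpanningTree_singleton Gpuz v⟩, ∅, (isSpanningTree_singleton Gppl v).1⟩

section Union

variable {G : SimpleGraph V} {F₁ F₂ : Finset V} {T₁ T₂ : Finset (Sym2 V)} {a b : V}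

lemma IsTreeSized.insert_union (hF : Disjoint F₁ F₂) (h₁ : IsTreeSized G F₁ T₁)
    (h₂ : IsTreeSized G F₂ T₂) (ha : a ∈ F₁) (hb : b ∈ F₂) (hab : G.Adj a b) :
    IsTreeSized G (F₁ ∪ F₂) (insert s(a, b) (T₁ ∪ T₂)) := by
  obtain ⟨hG₁, hT₁, hc₁⟩ := h₁
  obtain ⟨hG₂, hT₂, hc₂⟩ := h₂
  have hT : Disjoint T₁ T₂ := Finset.disjoint_left.2 fun e he₁ he₂ =>
    Finset.disjoint_left.1 hF (Finset.mem_sym2_iff.1 (hT₁ he₁) _ (Sym2.out_fst_mem e))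
      (Finset.mem_sym2_iff.1 (hT₂ he₂) _ (Sym2.out_fst_mem e))
  have hnew : s(a, b) ∉ T₁ ∪ T₂ := fun h => by
    rcases Finset.mem_union.1 h with h | h
    · exact Finset.disjoint_left.1 hF (Finset.mem_sym2_iff.1 (hT₁ h) b (by simp)) hb
    · exact Finset.disjoint_left.1 hF ha (Finset.mem_sym2_iff.1 (hT₂ h) a (by simp))
  refine ⟨by simpa [Set.insert_subset_iff, hab] using And.intro hG₁ hG₂, ?_, ?_⟩
  · refine Finset.insert_subset (by simp [ha, hb]) (Finset.union_subset
      (hT₁.trans (Finset.sym2_mono Finset.subset_union_left))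
      (hT₂.trans (Finset.sym2_mono Finset.subset_union_right)))
  · rw [Finset.card_insert_of_notMem hnew, Finset.card_union_of_disjoint hT,
      Finset.card_union_of_disjoint hF]
    omega

lemma Spans.insert_union (h₁ : Spans F₁ T₁) (h₂ : Spans F₂ T₂) (ha : a ∈ F₁) (hb : b ∈ F₂) :
    Spans (F₁ ∪ F₂) (insert s(a, b) (T₁ ∪ T₂)) := by
  set T := insert s(a, b) (T₁ ∪ T₂)
  have mono₁ : ∀ {x y}, x ∈ F₁ → y ∈ F₁ → Relation.ReflTransGen (fun a b => s(a, b) ∈ T) x y :=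
    fun hx hy => Relation.ReflTransGen.mono (fun _ _ h => by simp [T, h]) _ _ (h₁ _ hx _ hy)
  have mono₂ : ∀ {x y}, x ∈ F₂ → y ∈ F₂ → Relation.ReflTransGen (fun a b => s(a, b) ∈ T) x y :=
    fun hx hy => Relation.ReflTransGen.mono (fun _ _ h => by simp [T, h]) _ _ (h₂ _ hx _ hy)
  have hab : Relation.ReflTransGen (fun a b => s(a, b) ∈ T) a b := .single (by simp [T])
  have hba : Relation.ReflTransGen (fun a b => s(a, b) ∈ T) b a := .single (by simp [T])
  intro x hx y hy
  rcases Finset.mem_union.1 hx with hx | hx <;> rcases Finset.mem_union.1 hy with hy | hy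
  · exact mono₁ hx hy
  · exact ((mono₁ hx ha).trans hab).trans (mono₂ hb hy)
  · exact ((mono₂ hx hb).trans hba).trans (mono₁ ha hy)
  · exact mono₂ hx hy

lemma IsSpanningTree.insert_union (hF : Disjoint F₁ F₂) (h₁ : IsSpanningTree G F₁ T₁)
    (h₂ : IsSpanningTree G F₂ T₂) (ha : a ∈ F₁) (hb : b ∈ F₂) (hab : G.Adj a b) :
    IsSpanningTree G (F₁ ∪ F₂) (insert s(a, b) (T₁ ∪ T₂)) :=
  ⟨h₁.1.insert_union hF h₂.1 ha hb hab, h₁.2.insert_union h₂.2 ha hb⟩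

end Union

lemma IsCertified.union {Gpuz Gppl : SimpleGraph V} {A B : Set V} (hA : IsCertified Gpuz Gppl A)
    (hB : IsCertified Gpuz Gppl B) (hAB : Disjoint A B) {a b a' b' : V} (ha : a ∈ A) (hb : b ∈ B)
    (hab : Gpuz.Adj a b) (ha' : a' ∈ A) (hb' : b' ∈ B) (hab' : Gppl.Adj a' b') :
    IsCertified Gpuz Gppl (A ∪ B) := by
  obtain ⟨F₁, rfl, ⟨T₁, hT₁⟩, U₁, hU₁⟩ := hA
  obtain ⟨F₂, rfl, ⟨T₂, hT₂⟩, U₂, hU₂⟩ := hB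
  rw [Finset.disjoint_coe] at hAB
  exact ⟨F₁ ∪ F₂, by simp, ⟨_, hT₁.insert_union hAB hT₂ ha hb hab⟩,
    _, hU₁.insert_union hAB hU₂ ha' hb' hab'⟩

end Certificates

lemma _root_.Relation.ReflTransGen.exists_rel_of_mem_of_notMem {α : Type*} {r : α → α → Prop}
    {S : Set α} {a b : α} (h : Relation.ReflTransGen r a b) (ha : a ∈ S) (hb : b ∉ S) :
    ∃ x ∈ S, ∃ y ∉ S, r x y := by
  induction h with
  | refl => exact absurd ha hb
  | @tail c d _ hcd ih =>
    by_cases hc : c ∈ S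
    · exact ⟨c, hc, d, hb, hcd⟩
    · exact ih hc

section Dynamics

variable {V : Type*} {Gpuz Gppl : SimpleGraph V}

lemma LinkedDir.exists_adj_of_ae {A B : Set V} (h : LinkedDir Gpuz Gppl 1 1 ⊤ A B) :
    (∃ a ∈ A, ∃ b ∈ B, Gpuz.Adj a b) ∧ ∃ a ∈ A, ∃ b ∈ B, Gppl.Adj a b := by
  rcases h with ⟨a, ha, b, hb, hppl, hpuz⟩ | ⟨a, -, htop⟩ | ⟨a, ha, hppl, hpuz⟩
  · exact ⟨⟨a, ha, b, hb, hpuz⟩, a, ha, b, hb, hppl⟩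
  · simp at htop
  · unfold nbrCount at hpuz hppl
    obtain ⟨b, hb, hab⟩ : {u ∈ B | Gpuz.Adj a u}.Nonempty :=
      Set.nonempty_of_ncard_ne_zero (by omega)
    obtain ⟨b', hb', hab'⟩ : {u ∈ B | Gppl.Adj a u}.Nonempty :=
      Set.nonempty_of_ncard_ne_zero (by omega)
    exact ⟨⟨a, ha, b, hb, hab⟩, a, ha, b', hb', hab'⟩

lemma Linked.exists_adj_of_ae {A B : Set V} (h : Linked Gpuz Gppl 1 1 ⊤ A B) :
    (∃ a ∈ A, ∃ b ∈ B, Gpuz.Adj a b) ∧ ∃ a ∈ A, ∃ b ∈ B, Gppl.Adj a b := by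
  rcases h.2 with h | h
  · exact h.exists_adj_of_ae
  · obtain ⟨⟨a, ha, b, hb, hab⟩, a', ha', b', hb', hab'⟩ := h.exists_adj_of_ae
    exact ⟨⟨b, hb, a, ha, hab.symm⟩, b', hb', a', ha', hab'.symm⟩

section LinkClass

variable {σ τ : ℕ} {θ : ℕ∞} {P : Set (Set V)}

def linkClass (Gpuz Gppl : SimpleGraph V) (σ τ : ℕ) (θ : ℕ∞) (P : Set (Set V)) (W : Set V) :
    Set (Set V) :=
  {W' | W' ∈ P ∧ Relation.EqvGen (fun A B => A ∈ P ∧ B ∈ P ∧ Linked Gpuz Gppl σ τ θ A B) W W'}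

lemma step_eq_linkClass (P : Set (Set V)) :
    step Gpuz Gppl σ τ θ P = {U | ∃ W ∈ P, U = ⋃₀ linkClass Gpuz Gppl σ τ θ P W} :=
  rfl

lemma self_mem_linkClass {W : Set V} (hW : W ∈ P) : W ∈ linkClass Gpuz Gppl σ τ θ P W :=
  ⟨hW, .refl W⟩

lemma linkClass_eq_of_mem {W₁ W₂ A : Set V} (h₁ : A ∈ linkClass Gpuz Gppl σ τ θ P W₁)
    (h₂ : A ∈ linkClass Gpuz Gppl σ τ θ P W₂) :
    linkClass Gpuz Gppl σ τ θ P W₁ = linkClass Gpuz Gppl σ τ θ P W₂ := by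
  have e := Relation.EqvGen.is_equivalence
    (fun A B => A ∈ P ∧ B ∈ P ∧ Linked Gpuz Gppl σ τ θ A B)
  ext Z
  exact ⟨fun ⟨hZ, h⟩ => ⟨hZ, e.trans (e.trans h₂.2 (e.symm h₁.2)) h⟩,
    fun ⟨hZ, h⟩ => ⟨hZ, e.trans (e.trans h₁.2 (e.symm h₂.2)) h⟩⟩

lemma exists_linked_of_subset_linkClass {W : Set V} {𝒜 : Set (Set V)}
    (h𝒜 : 𝒜 ⊆ linkClass Gpuz Gppl σ τ θ P W) (hW : W ∈ 𝒜)
    (hne : 𝒜 ≠ linkClass Gpuz Gppl σ τ θ P W) :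
    ∃ X ∈ 𝒜, ∃ Y ∈ linkClass Gpuz Gppl σ τ θ P W, Y ∉ 𝒜 ∧ Linked Gpuz Gppl σ τ θ X Y := by
  obtain ⟨B, hB, hB𝒜⟩ := Set.exists_of_ssubset (h𝒜.ssubset_of_ne hne)
  have : Std.Symm (fun A B => A ∈ P ∧ B ∈ P ∧ Linked Gpuz Gppl σ τ θ A B) :=
    ⟨fun _ _ ⟨hA, hB, hne, hAB⟩ => ⟨hB, hA, hne.symm, hAB.symm⟩⟩
  have hWB := hB.2
  rw [Relation.EqvGen.eqvGen_eq_reflTransGen] at hWB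
  obtain ⟨X, hX, Y, hY, hXY⟩ := hWB.exists_rel_of_mem_of_notMem hW hB𝒜
  refine ⟨X, hX, Y, ⟨hXY.2.1, ?_⟩, hY, hXY.2.2⟩
  exact Relation.EqvGen.trans _ _ _ (h𝒜 hX).2 (.rel _ _ hXY)

end LinkClass

def IsCertifiedPartition (Gpuz Gppl : SimpleGraph V) (P : Set (Set V)) : Prop :=
  (∀ A ∈ P, IsCertified Gpuz Gppl A) ∧ P.PairwiseDisjoint id

namespace IsCertifiedPartition

variable {P : Set (Set V)} (hP : IsCertifiedPartition Gpuz Gppl P) {W : Set V}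
include hP

lemma exists_isCertified_insert {𝒜 : Set (Set V)} (h𝒜 : 𝒜 ⊆ linkClass Gpuz Gppl 1 1 ⊤ P W)
    (hW : W ∈ 𝒜) (hne : 𝒜 ≠ linkClass Gpuz Gppl 1 1 ⊤ P W)
    (hcert : IsCertified Gpuz Gppl (⋃₀ 𝒜)) :
    ∃ Y ∈ linkClass Gpuz Gppl 1 1 ⊤ P W, Y ∉ 𝒜 ∧ IsCertified Gpuz Gppl (⋃₀ insert Y 𝒜) := by
  obtain ⟨X, hX, Y, hY, hY𝒜, hXY⟩ := exists_linked_of_subset_linkClass h𝒜 hW hne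
  refine ⟨Y, hY, hY𝒜, ?_⟩
  have hdisj : Disjoint (⋃₀ 𝒜) Y := Set.disjoint_sUnion_left.2 fun A hA =>
    hP.2 (h𝒜 hA).1 hY.1 (by rintro rfl; exact hY𝒜 hA)
  obtain ⟨⟨a, ha, b, hb, hab⟩, a', ha', b', hb', hab'⟩ := hXY.exists_adj_of_ae
  rw [Set.sUnion_insert, Set.union_comm]
  exact hcert.union (hP.1 Y hY.1) hdisj (Set.mem_sUnion_of_mem ha hX) hb hab
    (Set.mem_sUnion_of_mem ha' hX) hb' hab'

variable [Finite V]

lemma isCertified_sUnion_linkClass (hW : W ∈ P) :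
    IsCertified Gpuz Gppl (⋃₀ linkClass Gpuz Gppl 1 1 ⊤ P W) := by
  set C := linkClass Gpuz Gppl 1 1 ⊤ P W
  obtain ⟨𝒜, ⟨h𝒜, hW𝒜, hcert⟩, hmax⟩ := Set.toFinite
    {𝒜 | 𝒜 ⊆ C ∧ W ∈ 𝒜 ∧ IsCertified Gpuz Gppl (⋃₀ 𝒜)} |>.exists_maximal
    ⟨{W}, by simpa using ⟨self_mem_linkClass hW, hP.1 W hW⟩⟩
  obtain rfl | hne := eq_or_ne 𝒜 C
  · exact hcert
  obtain ⟨Y, hY, hY𝒜, hcert'⟩ := hP.exists_isCertified_insert h𝒜 hW𝒜 hne hcert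
  exact absurd (hmax ⟨Set.insert_subset hY h𝒜, Set.mem_insert_of_mem _ hW𝒜, hcert'⟩
    (Set.subset_insert _ _) (Set.mem_insert _ _)) hY𝒜

lemma exists_isCertified_of_le_ncard {m : ℕ} (hW : W ∈ P) (hsmall : ∀ A ∈ P, A.ncard < m)
    (hbig : m ≤ (⋃₀ linkClass Gpuz Gppl 1 1 ⊤ P W).ncard) :
    ∃ S, IsCertified Gpuz Gppl S ∧ m ≤ S.ncard ∧ S.ncard < 2 * m := by
  set C := linkClass Gpuz Gppl 1 1 ⊤ P W
  -- A maximal certified union of fewer than `m` vertices; one more part, of size `< m`,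
  -- takes it past `m` but not past `2m`.
  obtain ⟨𝒜, ⟨h𝒜, hW𝒜, hcert, h𝒜m⟩, hmax⟩ := Set.toFinite
    {𝒜 | 𝒜 ⊆ C ∧ W ∈ 𝒜 ∧ IsCertified Gpuz Gppl (⋃₀ 𝒜) ∧ (⋃₀ 𝒜).ncard < m} |>.exists_maximal
    ⟨{W}, by simpa using ⟨self_mem_linkClass hW, hP.1 W hW, hsmall W hW⟩⟩
  have hne : 𝒜 ≠ C := by rintro rfl; omega
  obtain ⟨Y, hY, hY𝒜, hcert'⟩ := hP.exists_isCertified_insert h𝒜 hW𝒜 hne hcert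
  refine ⟨_, hcert', not_lt.1 fun hlt => hY𝒜 ?_, ?_⟩
  · exact hmax ⟨Set.insert_subset hY h𝒜, Set.mem_insert_of_mem _ hW𝒜, hcert', hlt⟩
      (Set.subset_insert _ _) (Set.mem_insert _ _)
  · rw [Set.sUnion_insert]
    have := Set.ncard_union_le Y (⋃₀ 𝒜)
    have := hsmall Y hY.1
    omega

lemma step : IsCertifiedPartition Gpuz Gppl (step Gpuz Gppl 1 1 ⊤ P) := by
  rw [step_eq_linkClass]
  refine ⟨fun _ ⟨W, hW, hU⟩ => hU ▸ hP.isCertified_sUnion_linkClass hW, ?_⟩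
  rintro _ ⟨W₁, -, rfl⟩ _ ⟨W₂, -, rfl⟩ hne
  refine Set.disjoint_left.2 fun x hx₁ hx₂ => hne ?_
  obtain ⟨A₁, hA₁, hxA₁⟩ := Set.mem_sUnion.1 hx₁
  obtain ⟨A₂, hA₂, hxA₂⟩ := Set.mem_sUnion.1 hx₂
  obtain rfl : A₁ = A₂ := by
    by_contra h
    exact Set.disjoint_left.1 (hP.2 hA₁.1 hA₂.1 h) hxA₁ hxA₂
  rw [linkClass_eq_of_mem hA₁ hA₂]

end IsCertifiedPartition

variable [Finite V]

lemma isCertifiedPartition_partAt (Gpuz Gppl : SimpleGraph V) (t : ℕ) :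
    IsCertifiedPartition Gpuz Gppl (partAt Gpuz Gppl 1 1 ⊤ t) := by
  induction t with
  | zero =>
    refine ⟨fun _ ⟨v, hv⟩ => hv ▸ isCertified_singleton Gpuz Gppl v, ?_⟩
    rintro _ ⟨v, rfl⟩ _ ⟨w, rfl⟩ hne
    simpa [Function.onFun] using fun h : v = w => hne (h ▸ rfl)
  | succ t ih =>
    rw [partAt, Function.iterate_succ_apply']
    exact ih.step

lemma exists_isCertified_of_solve (h : Solve Gpuz Gppl 1 1 ⊤) {m : ℕ} (hm : 2 ≤ m)
    (hmV : m ≤ Nat.card V) : ∃ S, IsCertified Gpuz Gppl S ∧ m ≤ S.ncard ∧ S.ncard < 2 * m := by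
  have hex : ∃ t, ∃ A ∈ partAt Gpuz Gppl 1 1 ⊤ t, m ≤ A.ncard := by
    obtain ⟨t, ht⟩ := h
    exact ⟨t, Set.univ, by simp [ht], by rwa [Set.ncard_univ]⟩
  obtain ⟨A, hA, hAm⟩ := Nat.find_spec hex
  obtain ⟨t, ht⟩ : ∃ t, Nat.find hex = t + 1 := by
    refine Nat.exists_eq_succ_of_ne_zero fun h0 => ?_
    rw [h0] at hA
    obtain ⟨v, rfl⟩ := hA
    simp at hAm
    omega
  have hsmall : ∀ B ∈ partAt Gpuz Gppl 1 1 ⊤ t, B.ncard < m := fun B hB =>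
    not_le.1 fun hle => Nat.find_min hex (by omega) ⟨B, hB, hle⟩
  rw [ht, partAt, Function.iterate_succ_apply', ← partAt, step_eq_linkClass] at hA
  obtain ⟨W, hW, rfl⟩ := hA
  exact (isCertifiedPartition_partAt Gpuz Gppl t).exists_isCertified_of_le_ncard hW hsmall hAm

end Dynamics

section ErdosRenyi

variable {V : Type*}

lemma mem_edgeSet_graphOf {e : Sym2 V} (he : ¬ e.IsDiag) (ω : {e : Sym2 V // ¬ e.IsDiag} → Bool) :
    e ∈ (graphOf ω).edgeSet ↔ ω ⟨e, he⟩ = true := by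
  simp [graphOf, he]

variable [Fintype V] {p : ℝ}

lemma prod_weight_nonneg (hp0 : 0 ≤ p) (hp1 : p ≤ 1) (ω : {e : Sym2 V // ¬ e.IsDiag} → Bool) :
    0 ≤ ∏ e, (if ω e then p else 1 - p) :=
  Finset.prod_nonneg fun _ _ => by split_ifs <;> linarith

lemma erProb_nonneg (hp0 : 0 ≤ p) (hp1 : p ≤ 1) (A : SimpleGraph V → Prop) : 0 ≤ erProb p A :=
  Finset.sum_nonneg fun ω _ => by
    split_ifs
    · exact prod_weight_nonneg hp0 hp1 ω
    · exact le_rfl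

lemma erProb_le_sum (hp0 : 0 ≤ p) (hp1 : p ≤ 1) {A : SimpleGraph V → Prop} {ι : Type*}
    (s : Finset ι) (B : ι → SimpleGraph V → Prop) (h : ∀ H, A H → ∃ i ∈ s, B i H) :
    erProb p A ≤ ∑ i ∈ s, erProb p (B i) := by
  unfold erProb
  rw [Finset.sum_comm]
  refine Finset.sum_le_sum fun ω _ => ?_
  have hw := prod_weight_nonneg hp0 hp1 ω
  split_ifs with hA
  · obtain ⟨i, hi, hB⟩ := h _ hA
    calc _ = if B i (graphOf ω) then ∏ e, (if ω e then p else 1 - p) else 0 := by rw [if_pos hB]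
      _ ≤ _ := Finset.single_le_sum (f := fun i => if B i (graphOf ω) then _ else 0)
          (fun _ _ => by split_ifs <;> simp [hw]) hi
  · exact Finset.sum_nonneg fun _ _ => by split_ifs <;> simp [hw]

lemma erProb_cylinder {T₁ T₀ : Finset (Sym2 V)} (h₁ : ∀ e ∈ T₁, ¬ e.IsDiag)
    (h₀ : ∀ e ∈ T₀, ¬ e.IsDiag) (hd : Disjoint T₁ T₀) :
    erProb p (fun H => ↑T₁ ⊆ H.edgeSet ∧ ∀ e ∈ T₀, e ∉ H.edgeSet) =
      p ^ T₁.card * (1 - p) ^ T₀.card := by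
  set f : {e : Sym2 V // ¬ e.IsDiag} → Bool → ℝ := fun c b =>
    if (c.1 ∈ T₁ → b = true) ∧ (c.1 ∈ T₀ → b = false) then (if b then p else 1 - p) else 0
  have hcyl : ∀ ω : {e : Sym2 V // ¬ e.IsDiag} → Bool,
      (↑T₁ ⊆ (graphOf ω).edgeSet ∧ ∀ e ∈ T₀, e ∉ (graphOf ω).edgeSet) ↔
        ∀ c, (c.1 ∈ T₁ → ω c = true) ∧ (c.1 ∈ T₀ → ω c = false) := fun ω => by
    constructor
    · rintro ⟨hT₁, hT₀⟩ ⟨e, he⟩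
      exact ⟨fun h => (mem_edgeSet_graphOf he ω).1 (hT₁ h),
        fun h => by simpa [mem_edgeSet_graphOf he ω] using hT₀ e h⟩
    · intro h
      exact ⟨fun e he => (mem_edgeSet_graphOf (h₁ e he) ω).2 ((h ⟨e, h₁ e he⟩).1 he),
        fun e he => by simpa [mem_edgeSet_graphOf (h₀ e he) ω] using (h ⟨e, h₀ e he⟩).2 he⟩
  have hfactor : ∀ c, ∑ b, f c b =
      (if c ∈ T₁.subtype _ then p else 1) * (if c ∈ T₀.subtype _ then 1 - p else 1) := by
    intro c
    have : c.1 ∈ T₁ → c.1 ∉ T₀ := fun h => Finset.disjoint_left.1 hd h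
    by_cases hc₁ : c.1 ∈ T₁ <;> by_cases hc₀ : c.1 ∈ T₀ <;> simp_all [f]
  calc erProb p (fun H => ↑T₁ ⊆ H.edgeSet ∧ ∀ e ∈ T₀, e ∉ H.edgeSet)
      = ∑ ω : {e : Sym2 V // ¬ e.IsDiag} → Bool, ∏ c, f c (ω c) := by
        refine Finset.sum_congr rfl fun ω _ => ?_
        simp only [f, Fintype.prod_ite_zero, hcyl]
    _ = ∏ c, ∑ b, f c b := (Fintype.prod_sum f).symm
    _ = p ^ T₁.card * (1 - p) ^ T₀.card := by
        simp only [hfactor, Finset.prod_mul_distrib, Fintype.prod_ite_mem, Finset.prod_const,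
          Finset.card_subtype, Finset.filter_true_of_mem h₁, Finset.filter_true_of_mem h₀]

lemma erProb_true : erProb p (fun _ : SimpleGraph V => True) = 1 := by
  simpa using erProb_cylinder (V := V) (p := p) (T₁ := ∅) (T₀ := ∅) (by simp) (by simp) (by simp)

lemma erProb_subset_edgeSet_le (hp0 : 0 ≤ p) (U : Finset (Sym2 V)) :
    erProb p (fun H : SimpleGraph V => ↑U ⊆ H.edgeSet) ≤ p ^ U.card := by
  by_cases hU : ∀ e ∈ U, ¬ e.IsDiag
  · simpa using (erProb_cylinder (p := p) hU (T₀ := ∅) (by simp) (by simp)).le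
  · push Not at hU
    obtain ⟨e, he, hdiag⟩ := hU
    have : ∀ H : SimpleGraph V, ¬ ↑U ⊆ H.edgeSet := fun H hUH =>
      H.not_isDiag_of_mem_edgeSet (hUH he) hdiag
    simp only [erProb, this, if_false, Finset.sum_const_zero]
    positivity

lemma sum_erProb_le_one (hp0 : 0 ≤ p) (hp1 : p ≤ 1) {ι : Type*} (s : Finset ι)
    (B : ι → SimpleGraph V → Prop) (hB : ∀ H, ∀ i ∈ s, ∀ j ∈ s, B i H → B j H → i = j) :
    ∑ i ∈ s, erProb p (B i) ≤ 1 := by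
  rw [← erProb_true (V := V) (p := p)]
  unfold erProb
  rw [Finset.sum_comm]
  refine Finset.sum_le_sum fun ω _ => ?_
  have hw := prod_weight_nonneg hp0 hp1 ω
  rw [Finset.sum_ite, Finset.sum_const_zero, add_zero, Finset.sum_const, nsmul_eq_mul,
    if_pos trivial]
  have : (s.filter fun i => B i (graphOf ω)).card ≤ 1 := Finset.card_le_one.2 fun i hi j hj =>
    hB _ i (Finset.mem_filter.1 hi).1 j (Finset.mem_filter.1 hj).1
      (Finset.mem_filter.1 hi).2 (Finset.mem_filter.1 hj).2
  exact mul_le_of_le_one_left hw (by exact_mod_cast this)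

end ErdosRenyi

section TreeCount

variable {V : Type*} [Fintype V] {G : SimpleGraph V}

lemma ncard_neighborSet_eq_degree (G : SimpleGraph V) (v : V) :
    (G.neighborSet v).ncard = G.degree v := by
  rw [← G.card_neighborSet_eq_degree, ← Nat.card_eq_fintype_card, Nat.card_coe_set_eq]

def incidentEdges (G : SimpleGraph V) (F : Finset V) : Finset (Sym2 V) :=
  G.edgeFinset.filter fun e => ∃ x ∈ e, x ∈ F

lemma subset_incidentEdges {F : Finset V} {T : Finset (Sym2 V)} (hTG : ↑T ⊆ G.edgeSet)
    (hTF : T ⊆ F.sym2) : T ⊆ incidentEdges G F := fun e he =>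
  Finset.mem_filter.2 ⟨by simpa using hTG he,
    e.out.1, Sym2.out_fst_mem e, Finset.mem_sym2_iff.1 (hTF he) _ (Sym2.out_fst_mem e)⟩

lemma card_incidentEdges_sdiff_add_le {D : ℕ} (hdeg : ∀ u, G.degree u ≤ D) {F : Finset V}
    {T : Finset (Sym2 V)} (hTG : ↑T ⊆ G.edgeSet) (hTF : T ⊆ F.sym2) :
    (incidentEdges G F \ T).card + 2 * T.card ≤ D * F.card := by
  set c : Sym2 V → ℕ := fun e => (F.bipartiteBelow (· ∈ ·) e).card
  have hT : ∀ e ∈ T, 2 ≤ c e := by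
    intro e he
    induction e with
    | _ x y =>
      have hxy : x ≠ y := G.ne_of_adj (hTG he)
      have hF := Finset.mem_sym2_iff.1 (hTF he)
      calc 2 = ({x, y} : Finset V).card := (Finset.card_pair hxy).symm
        _ ≤ c s(x, y) := Finset.card_le_card fun z hz => by
          rcases Finset.mem_insert.1 hz with rfl | hz
          · simpa using hF z (by simp)
          · rw [Finset.mem_singleton.1 hz]; simpa using hF y (by simp)
  have hI : ∀ e ∈ incidentEdges G F \ T, 1 ≤ c e := by
    intro e he
    obtain ⟨x, hxe, hxF⟩ := (Finset.mem_filter.1 (Finset.mem_sdiff.1 he).1).2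
    exact Finset.card_pos.2 ⟨x, by simpa using ⟨hxF, hxe⟩⟩
  calc (incidentEdges G F \ T).card + 2 * T.card
      = ∑ _e ∈ incidentEdges G F \ T, 1 + ∑ _e ∈ T, 2 := by simp [mul_comm]
    _ ≤ ∑ e ∈ incidentEdges G F \ T, c e + ∑ e ∈ T, c e :=
        add_le_add (Finset.sum_le_sum hI) (Finset.sum_le_sum hT)
    _ = ∑ e ∈ incidentEdges G F, c e := Finset.sum_sdiff (subset_incidentEdges hTG hTF)
    _ ≤ ∑ e ∈ G.edgeFinset, c e := Finset.sum_le_sum_of_subset (Finset.filter_subset _ _)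
    _ = ∑ u ∈ F, G.degree u := by
        rw [← Finset.sum_card_bipartiteAbove_eq_sum_card_bipartiteBelow]
        refine Finset.sum_congr rfl fun u _ => ?_
        rw [← G.card_incidenceFinset_eq_degree, G.incidenceFinset_eq_filter]
        rfl
    _ ≤ D * F.card := by
        simpa [mul_comm] using Finset.sum_le_sum fun u (_ : u ∈ F) => hdeg u

def spanningTrees (G : SimpleGraph V) (s : ℕ) : Finset (Finset V × Finset (Sym2 V)) :=
  Finset.univ.filter fun FT => FT.1.card = s ∧ IsSpanningTree G FT.1 FT.2

def IsOpenCluster (G H : SimpleGraph V) (F : Finset V) (T : Finset (Sym2 V)) : Prop :=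
  ↑T ⊆ H.edgeSet ∧ ∀ e ∈ incidentEdges G F \ T, e ∉ H.edgeSet

namespace IsOpenCluster

variable {H : SimpleGraph V} {F : Finset V} {T : Finset (Sym2 V)}

lemma mem_iff_reachable (hT : IsSpanningTree G F T) (hH : IsOpenCluster G H F T) {v : V}
    (hv : v ∈ F) (u : V) : u ∈ F ↔ (G ⊓ H).Reachable v u := by
  rw [SimpleGraph.reachable_iff_reflTransGen]
  obtain ⟨⟨hTG, hTF, -⟩, hspan⟩ := hT
  constructor
  · intro hu
    refine Relation.ReflTransGen.mono (fun x y hxy => ?_) _ _ (hspan v hv u hu)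
    exact ⟨hTG hxy, hH.1 hxy⟩
  · intro h
    induction h with
    | refl => exact hv
    | @tail x y _ hxy hx =>
      by_cases hxyT : s(x, y) ∈ T
      · exact Finset.mem_sym2_iff.1 (hTF hxyT) y (by simp)
      · refine absurd hxy.2 (hH.2 _ (Finset.mem_sdiff.2 ⟨?_, hxyT⟩))
        exact Finset.mem_filter.2 ⟨by simpa using hxy.1, x, by simp, hx⟩

lemma eq_filter (hT : IsSpanningTree G F T) (hH : IsOpenCluster G H F T) :
    T = (incidentEdges G F).filter (· ∈ H.edgeSet) := by
  ext e
  refine ⟨fun he => Finset.mem_filter.2 ⟨subset_incidentEdges hT.1.1 hT.1.2.1 he, hH.1 he⟩,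
    fun he => ?_⟩
  by_contra heT
  exact hH.2 e (Finset.mem_sdiff.2 ⟨(Finset.mem_filter.1 he).1, heT⟩) (Finset.mem_filter.1 he).2

lemma unique {F' : Finset V} {T' : Finset (Sym2 V)} (hT : IsSpanningTree G F T)
    (hT' : IsSpanningTree G F' T') (hH : IsOpenCluster G H F T) (hH' : IsOpenCluster G H F' T')
    {v : V} (hv : v ∈ F) (hv' : v ∈ F') : F = F' ∧ T = T' := by
  obtain rfl : F = F' := Finset.ext fun u => by
    rw [hH.mem_iff_reachable hT hv, hH'.mem_iff_reachable hT' hv']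
  exact ⟨rfl, (hH.eq_filter hT).trans (hH'.eq_filter hT').symm⟩

end IsOpenCluster

lemma erProb_isOpenCluster {p : ℝ} {F : Finset V} {T : Finset (Sym2 V)}
    (hT : IsSpanningTree G F T) :
    erProb p (fun H => IsOpenCluster G H F T) =
      p ^ T.card * (1 - p) ^ (incidentEdges G F \ T).card := by
  refine erProb_cylinder (fun e he => G.not_isDiag_of_mem_edgeSet (hT.1.1 he))
    (fun e he => ?_) Finset.disjoint_sdiff
  exact G.not_isDiag_of_mem_edgeSet
    (by simpa using (Finset.mem_filter.1 (Finset.mem_sdiff.1 he).1).1)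

lemma exp_neg_le_one_sub_inv_pow {D : ℕ} (hD : 2 ≤ D) (s : ℕ) :
    Real.exp (-(s + 2)) ≤ (1 - (D : ℝ)⁻¹) ^ (D * s - 2 * (s - 1)) := by
  have hD' : (2 : ℝ) ≤ D := by exact_mod_cast hD
  have hbase : Real.exp (-((D : ℝ) - 1)⁻¹) ≤ 1 - (D : ℝ)⁻¹ := by
    have hD1 : (0 : ℝ) < D - 1 := by linarith
    have h := Real.add_one_le_exp ((D : ℝ) - 1)⁻¹
    rw [Real.exp_neg, show 1 - (D : ℝ)⁻¹ = (((D : ℝ) - 1)⁻¹ + 1)⁻¹ by field_simp; ring]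
    exact inv_anti₀ (by positivity) h
  have hK : ((D * s - 2 * (s - 1) : ℕ) : ℝ) ≤ ((D : ℝ) - 1) * (s + 2) := by
    obtain ⟨d, rfl⟩ : ∃ d, D = d + 2 := ⟨D - 2, by omega⟩
    rcases Nat.eq_zero_or_pos s with rfl | hs
    · simp; linarith
    rw [show (d + 2) * s - 2 * (s - 1) = d * s + 2 by
      rw [add_mul, Nat.add_sub_assoc (by omega)]; omega]
    push_cast
    nlinarith [Nat.cast_nonneg (α := ℝ) d, Nat.cast_nonneg (α := ℝ) s]
  calc Real.exp (-(s + 2))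
      ≤ Real.exp (-((D : ℝ) - 1)⁻¹) ^ (D * s - 2 * (s - 1)) := by
        rw [← Real.exp_nat_mul, Real.exp_le_exp, mul_neg, neg_le_neg_iff]
        rw [← div_eq_mul_inv, div_le_iff₀ (by linarith)]
        linarith
    _ ≤ (1 - (D : ℝ)⁻¹) ^ (D * s - 2 * (s - 1)) :=
        pow_le_pow_left₀ (Real.exp_pos _).le hbase _

lemma pow_mul_pow_le_erProb_isOpenCluster {D : ℕ} (hdeg : ∀ u, G.degree u ≤ D) {q : ℝ}
    (hq0 : 0 ≤ q) (hq1 : q ≤ 1) {s : ℕ} {FT : Finset V × Finset (Sym2 V)}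
    (hFT : FT ∈ spanningTrees G s) :
    q ^ (s - 1) * (1 - q) ^ (D * s - 2 * (s - 1)) ≤
      erProb q (fun H => IsOpenCluster G H FT.1 FT.2) := by
  obtain ⟨hs, hT⟩ := (Finset.mem_filter.1 hFT).2
  have hcard := card_incidentEdges_sdiff_add_le hdeg hT.1.1 hT.1.2.1
  have hTcard : FT.2.card = s - 1 := by have := hT.1.2.2; omega
  rw [hs] at hcard
  rw [erProb_isOpenCluster hT, hTcard]
  exact mul_le_mul_of_nonneg_left
    (pow_le_pow_of_le_one (by linarith) (by linarith) (by omega)) (by positivity)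

/-- The open clusters of a fixed vertex in bond percolation of parameter `1 / D` are disjoint
events. -/
lemma card_spanningTrees_mem_le {D : ℕ} (hdeg : ∀ u, G.degree u ≤ D) (hD : 2 ≤ D) (v : V)
    (s : ℕ) :
    (((spanningTrees G s).filter (v ∈ ·.1)).card : ℝ) ≤ (D : ℝ) ^ (s - 1) * Real.exp (s + 2) := by
  set q : ℝ := (D : ℝ)⁻¹
  have hD' : (2 : ℝ) ≤ D := by exact_mod_cast hD
  have hq0 : 0 ≤ q := by positivity
  have hq1 : q ≤ 1 := inv_le_one_of_one_le₀ (by linarith)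
  set c : ℝ := q ^ (s - 1) * (1 - q) ^ (D * s - 2 * (s - 1))
  have hsum := sum_erProb_le_one hq0 hq1 ((spanningTrees G s).filter (v ∈ ·.1))
    (fun FT H => IsOpenCluster G H FT.1 FT.2) fun H FT hFT FT' hFT' hH hH' => by
      simp only [spanningTrees, Finset.mem_filter, Finset.mem_univ, true_and] at hFT hFT'
      exact Prod.ext_iff.2 (hH.unique hFT.1.2 hFT'.1.2 hH' hFT.2 hFT'.2)
  have hcount := (Finset.card_nsmul_le_sum _ _ c fun FT hFT =>
    pow_mul_pow_le_erProb_isOpenCluster hdeg hq0 hq1 (Finset.mem_filter.1 hFT).1).trans hsum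
  rw [nsmul_eq_mul] at hcount
  have hc : 1 ≤ (D : ℝ) ^ (s - 1) * Real.exp (s + 2) * c := by
    calc 1 = Real.exp (s + 2) * Real.exp (-(s + 2)) := by rw [← Real.exp_add]; simp
      _ ≤ Real.exp (s + 2) * (1 - q) ^ (D * s - 2 * (s - 1)) := by
          gcongr; exact exp_neg_le_one_sub_inv_pow hD s
      _ = (D : ℝ) ^ (s - 1) * Real.exp (s + 2) * c := by
          simp only [c, q, inv_pow]
          field_simp
  calc _ ≤ (D : ℝ) ^ (s - 1) * Real.exp (s + 2) * c * _ := le_mul_of_one_le_left (by positivity) hc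
    _ = (D : ℝ) ^ (s - 1) * Real.exp (s + 2) * (_ * c) := by ring
    _ ≤ (D : ℝ) ^ (s - 1) * Real.exp (s + 2) := mul_le_of_le_one_right (by positivity) hcount

lemma card_spanningTrees_le {D : ℕ} (hdeg : ∀ u, G.degree u ≤ D) (hD : 2 ≤ D) {s : ℕ}
    (hs : 1 ≤ s) :
    ((spanningTrees G s).card : ℝ) ≤ Fintype.card V * ((D : ℝ) ^ (s - 1) * Real.exp (s + 2)) := by
  have hcover : spanningTrees G s ⊆
      Finset.univ.biUnion fun v => (spanningTrees G s).filter (v ∈ ·.1) := by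
    intro FT hFT
    obtain ⟨v, hv⟩ := Finset.card_pos.1 (by rw [(Finset.mem_filter.1 hFT).2.1]; omega)
    exact Finset.mem_biUnion.2 ⟨v, Finset.mem_univ _, Finset.mem_filter.2 ⟨hFT, hv⟩⟩
  calc ((spanningTrees G s).card : ℝ)
      ≤ ∑ v : V, (((spanningTrees G s).filter (v ∈ ·.1)).card : ℝ) := by
        exact_mod_cast (Finset.card_le_card hcover).trans Finset.card_biUnion_le
    _ ≤ ∑ _v : V, (D : ℝ) ^ (s - 1) * Real.exp (s + 2) :=
        Finset.sum_le_sum fun v _ => card_spanningTrees_mem_le hdeg hD v s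
    _ = _ := by simp

end TreeCount

section UnionBound

variable {V : Type*} [Fintype V] {p : ℝ}

lemma erProb_exists_subset_edgeSet_le (hp0 : 0 ≤ p) (hp1 : p ≤ 1) (F : Finset V) (k : ℕ) :
    erProb p (fun H : SimpleGraph V => ∃ U ∈ F.sym2.powersetCard k, ↑U ⊆ H.edgeSet) ≤
      ((F.card + 1).choose 2).choose k * p ^ k := by
  calc _ ≤ ∑ U ∈ F.sym2.powersetCard k, erProb p (fun H : SimpleGraph V => ↑U ⊆ H.edgeSet) :=
        erProb_le_sum hp0 hp1 _ _ fun _ => id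
    _ ≤ ∑ U ∈ F.sym2.powersetCard k, p ^ k := Finset.sum_le_sum fun U hU => by
        simpa [(Finset.mem_powersetCard.1 hU).2] using erProb_subset_edgeSet_le hp0 U
    _ = _ := by simp [Finset.card_sym2]

lemma exists_spanningTree_of_solve {Gpuz Gppl : SimpleGraph V} (h : Solve Gpuz Gppl 1 1 ⊤)
    {m : ℕ} (hm : 2 ≤ m) (hmV : m ≤ Fintype.card V) :
    ∃ s ∈ Finset.Ico m (2 * m), ∃ FT ∈ spanningTrees Gpuz s,
      ∃ U ∈ FT.1.sym2.powersetCard (s - 1), ↑U ⊆ Gppl.edgeSet := by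
  obtain ⟨_, ⟨F, rfl, ⟨T, hT⟩, U, hUG, hUF, hU⟩, hmF, hFm⟩ :=
    exists_isCertified_of_solve h hm (by rwa [Nat.card_eq_fintype_card])
  rw [Set.ncard_coe_finset] at hmF hFm
  exact ⟨F.card, Finset.mem_Ico.2 ⟨hmF, hFm⟩, (F, T), by simp [spanningTrees, hT], U,
    Finset.mem_powersetCard.2 ⟨hUF, by omega⟩, hUG⟩

/-- `N D^(s-1) e^(s+2)` bounds the number of sets of size `s` with a spanning puzzle tree, the
binomial the choices of `s - 1` people edges inside such a set. -/
def unionBoundTerm (N D : ℕ) (p : ℝ) (s : ℕ) : ℝ :=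
  N * ((D : ℝ) ^ (s - 1) * Real.exp (s + 2)) * ((s + 1).choose 2).choose (s - 1) * p ^ (s - 1)

lemma solveProb_le_sum {G : SimpleGraph V} {D : ℕ} (hdeg : ∀ u, G.degree u ≤ D) (hD : 2 ≤ D)
    (hp0 : 0 ≤ p) (hp1 : p ≤ 1) {m : ℕ} (hm : 2 ≤ m) (hmV : m ≤ Fintype.card V) :
    solveProb G 1 1 ⊤ p ≤ ∑ s ∈ Finset.Ico m (2 * m), unionBoundTerm (Fintype.card V) D p s := by
  refine (erProb_le_sum hp0 hp1 _ _ fun H hH => exists_spanningTree_of_solve hH hm hmV).trans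
    (Finset.sum_le_sum fun s hs => ?_)
  have hs : 1 ≤ s := by have := (Finset.mem_Ico.1 hs).1; omega
  calc _ ≤ ∑ FT ∈ spanningTrees G s,
        erProb p (fun H : SimpleGraph V => ∃ U ∈ FT.1.sym2.powersetCard (s - 1), ↑U ⊆ H.edgeSet) :=
        erProb_le_sum hp0 hp1 _ _ fun _ => id
    _ ≤ ∑ _FT ∈ spanningTrees G s, ((s + 1).choose 2).choose (s - 1) * p ^ (s - 1) :=
        Finset.sum_le_sum fun FT hFT => by
          simpa [(Finset.mem_filter.1 hFT).2.1] using
            erProb_exists_subset_edgeSet_le hp0 hp1 FT.1 (s - 1)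
    _ ≤ _ := by
        rw [Finset.sum_const, nsmul_eq_mul, ← mul_assoc, unionBoundTerm]
        gcongr
        exact card_spanningTrees_le hdeg hD hs

end UnionBound

section Asymptotics

lemma limsup_nonneg_of_nonneg {ι : Type*} {f : Filter ι} [f.NeBot] {u : ι → ℝ}
    (hu : ∀ i, 0 ≤ u i) : 0 ≤ limsup u f := by
  by_cases hb : f.IsBoundedUnder (· ≤ ·) u
  · exact le_limsup_of_frequently_le (.of_forall hu) hb
  · have : {a | ∀ᶠ i in f, u i ≤ a} = ∅ := Set.eq_empty_of_forall_notMem fun a ha => hb ⟨a, ha⟩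
    rw [limsup_eq, this, Real.sInf_empty]

lemma cast_choose_le_exp_mul_div_pow (M : ℕ) {k : ℕ} (hk : 1 ≤ k) :
    (M.choose k : ℝ) ≤ (Real.exp 1 * M / k) ^ k := by
  have hk0 : (0 : ℝ) < k := by exact_mod_cast hk
  have hkk : (k : ℝ) ^ k ≤ Real.exp k * k.factorial := by
    rw [← div_le_iff₀ (by positivity)]
    exact Real.pow_div_factorial_le_exp _ hk0.le k
  calc (M.choose k : ℝ) ≤ (M : ℝ) ^ k / k.factorial := Nat.choose_le_pow_div k M
    _ ≤ (Real.exp 1 * M / k) ^ k := by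
        rw [div_pow, mul_pow, ← Real.exp_nat_mul, mul_one,
          div_le_div_iff₀ (by positivity) (by positivity)]
        nlinarith [pow_nonneg (Nat.cast_nonneg (α := ℝ) M) k]

lemma unionBoundTerm_le {N D : ℕ} (hD : 0 < D) {μ L : ℝ} (hμ : 0 ≤ μ) (hL : 0 < L) {s : ℕ}
    (hs : 3 ≤ s) :
    unionBoundTerm N D (μ / (D * L)) s ≤
      N * (Real.exp 7 * (Real.exp 2 * μ / 2 * ((s - 1 : ℕ) / L)) ^ (s - 1)) := by
  rw [unionBoundTerm, mul_assoc, mul_assoc]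
  refine mul_le_mul_of_nonneg_left ?_ (Nat.cast_nonneg N)
  rw [← mul_assoc]
  have hD : (0 : ℝ) < D := by exact_mod_cast hD
  obtain ⟨k, rfl⟩ : ∃ k, s = k + 1 := ⟨s - 1, by omega⟩
  simp only [Nat.add_sub_cancel]
  have hk : (2 : ℝ) ≤ k := by exact_mod_cast (by omega : 2 ≤ k)
  have hM : (((k + 1 + 1).choose 2 : ℕ) : ℝ) = (k + 2) * (k + 1) / 2 := by
    rw [Nat.cast_choose_two]; push_cast; ring
  have hratio : ((k : ℝ) + 2) * (k + 1) / k ^ 2 ≤ 1 + 4 / k := by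
    rw [div_le_iff₀ (by positivity)]
    field_simp
    nlinarith
  have hratio_pow : (((k : ℝ) + 2) * (k + 1) / k ^ 2) ^ k ≤ Real.exp 4 := by
    calc _ ≤ (1 + 4 / (k : ℝ)) ^ k := pow_le_pow_left₀ (by positivity) hratio k
      _ ≤ Real.exp (4 / k) ^ k := pow_le_pow_left₀ (by positivity)
          (by linarith [Real.add_one_le_exp (4 / (k : ℝ))]) k
      _ = Real.exp 4 := by rw [← Real.exp_nat_mul]; field_simp
  have hchoose := cast_choose_le_exp_mul_div_pow ((k + 1 + 1).choose 2) (by omega : 1 ≤ k)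
  rw [hM] at hchoose
  have hbase : (D : ℝ) * Real.exp 1 * (Real.exp 1 * ((k + 2) * (k + 1) / 2) / k) * (μ / (D * L)) =
      Real.exp 2 * μ / 2 * (k / L) * (((k : ℝ) + 2) * (k + 1) / k ^ 2) := by
    rw [show Real.exp 2 = Real.exp 1 * Real.exp 1 by rw [← Real.exp_add]; norm_num]
    field_simp
  have hexp : Real.exp ((k + 1 : ℕ) + 2) = Real.exp 3 * Real.exp 1 ^ k := by
    rw [← Real.exp_nat_mul, ← Real.exp_add]; push_cast; ring_nf
  calc (D : ℝ) ^ k * Real.exp ((k + 1 : ℕ) + 2) * ((k + 1 + 1).choose 2).choose k *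
        (μ / (D * L)) ^ k
      ≤ D ^ k * Real.exp ((k + 1 : ℕ) + 2) * (Real.exp 1 * ((k + 2) * (k + 1) / 2) / k) ^ k *
          (μ / (D * L)) ^ k := by gcongr
    _ = Real.exp 3 * (Real.exp 2 * μ / 2 * (k / L)) ^ k *
          (((k : ℝ) + 2) * (k + 1) / k ^ 2) ^ k := by
        rw [mul_assoc (Real.exp 3), ← mul_pow, ← hbase, hexp, mul_pow, mul_pow, mul_pow]
        ring
    _ ≤ Real.exp 3 * (Real.exp 2 * μ / 2 * (k / L)) ^ k * Real.exp 4 := by gcongr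
    _ = Real.exp 7 * (Real.exp 2 * μ / 2 * (k / L)) ^ k := by
        rw [mul_right_comm, ← Real.exp_add]; norm_num

lemma exists_mul_log_le {a : ℝ} (ha : 0 < a) (h₁ : a < Real.exp (-1))
    (h₂ : 2 * a < Real.exp (-1 / 2)) :
    ∃ c < -1, ∀ᶠ L in atTop, ∀ u ∈ Set.Icc (1 : ℝ) (2 + 2 / L), u * Real.log (a * u) ≤ c := by
  set g : ℝ → ℝ := fun u => u * Real.log u + Real.log a * u
  have hg : ∀ u > 0, u * Real.log (a * u) = g u := fun u hu => by
    simp only [g, Real.log_mul ha.ne' hu.ne']; ring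
  have hconv : ConvexOn ℝ (Set.Ici 0) g :=
    Real.convexOn_mul_log.add ((LinearMap.mul ℝ ℝ (Real.log a)).convexOn (convex_Ici 0))
  have hg1 : g 1 < -1 := by
    simpa [g] using (Real.log_lt_iff_lt_exp ha).2 h₁
  have hg2 : g 2 < -1 := by
    rw [← hg 2 two_pos, show a * 2 = 2 * a by ring]
    have := (Real.log_lt_iff_lt_exp (by positivity)).2 h₂
    linarith
  have hcont : ContinuousAt g 2 := by
    have := Real.continuousAt_log (two_ne_zero (α := ℝ))
    fun_prop
  obtain ⟨u₁, hu₁, hgu₁⟩ : ∃ u₁ > 2, g u₁ < -1 :=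
    ((hcont.eventually (gt_mem_nhds hg2)).filter_mono (nhdsWithin_le_nhds (s := Set.Ioi 2))
      |>.and self_mem_nhdsWithin).exists.imp fun u h => ⟨h.2, h.1⟩
  refine ⟨max (g 1) (g u₁), max_lt hg1 hgu₁, ?_⟩
  have hlim : Tendsto (fun L : ℝ => 2 + 2 / L) atTop (𝓝 2) := by
    simpa using (tendsto_const_nhds (x := (2 : ℝ))).add
      ((tendsto_const_nhds (x := (2 : ℝ))).div_atTop tendsto_id)
  filter_upwards [hlim.eventually (eventually_le_nhds hu₁)] with L hL u hu
  rw [hg u (by linarith [hu.1])]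
  exact hconv.le_on_segment (by simp) (by simp; linarith)
    (by rw [segment_eq_Icc (by linarith)]; exact ⟨hu.1, hu.2.trans hL⟩)

lemma pow_le_exp_of_mul_log_le {a L c : ℝ} (ha : 0 < a) (hL : 0 < L) {k : ℕ}
    (h : k / L * Real.log (a * (k / L)) ≤ c) : (a * (k / L)) ^ k ≤ Real.exp (c * L) := by
  rcases Nat.eq_zero_or_pos k with rfl | hk
  · simp only [CharP.cast_eq_zero, zero_div, zero_mul, pow_zero] at h ⊢
    exact Real.one_le_exp (by positivity)
  calc (a * (k / L)) ^ k = Real.exp (L * (k / L * Real.log (a * (k / L)))) := by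
        rw [← Real.rpow_natCast, Real.rpow_def_of_pos (by positivity)]
        congr 1
        field_simp
    _ ≤ Real.exp (c * L) := by
        rw [Real.exp_le_exp, mul_comm c]
        exact mul_le_mul_of_nonneg_left h hL.le

lemma tendsto_log_add_two_mul_exp_neg {δ : ℝ} (hδ : 0 < δ) :
    Tendsto (fun N : ℕ => (Real.log N + 2) * Real.exp (-δ * Real.log N)) atTop (𝓝 0) := by
  have hy : Tendsto (fun y : ℝ => δ⁻¹ * (y ^ 1 * Real.exp (-y)) + 2 * Real.exp (-y))
      atTop (𝓝 0) := by
    simpa using ((Real.tendsto_pow_mul_exp_neg_atTop_nhds_zero 1).const_mul δ⁻¹).add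
      (Real.tendsto_exp_neg_atTop_nhds_zero.const_mul 2)
  have hx : Tendsto (fun x : ℝ => (x + 2) * Real.exp (-δ * x)) atTop (𝓝 0) := by
    refine (hy.comp (tendsto_id.const_mul_atTop hδ)).congr fun x => ?_
    simp only [Function.comp_apply, id, pow_one, neg_mul]
    field_simp
  exact hx.comp (Real.tendsto_log_atTop.comp tendsto_natCast_atTop_atTop)

end Asymptotics

lemma _root_.SimpleGraph.Connected.two_le_of_degree_le {V : Type*} [Fintype V] {G : SimpleGraph V}
    (hG : G.Connected) (hV : 3 ≤ Fintype.card V) {D : ℕ} (hdeg : ∀ v, G.degree v ≤ D) :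
    2 ≤ D := by
  by_contra! hD
  have hsum := G.sum_degrees_eq_twice_card_edges
  have hdeg_sum : ∑ v, G.degree v ≤ Fintype.card V := by
    simpa using Finset.sum_le_sum fun v (_ : v ∈ Finset.univ) => (hdeg v).trans (by omega : D ≤ 1)
  have hedges := hG.card_vert_le_card_edgeSet_add_one
  rw [Nat.card_eq_fintype_card, Nat.card_eq_fintype_card, ← SimpleGraph.edgeFinset_card] at hedges
  omega

section Bound

lemma cast_sub_one_div_mem_Icc {L : ℝ} (hL : 0 < L) {s : ℕ}
    (hs : s ∈ Finset.Ico (⌈L⌉₊ + 1) (2 * (⌈L⌉₊ + 1))) :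
    ((s - 1 : ℕ) : ℝ) / L ∈ Set.Icc (1 : ℝ) (2 + 2 / L) := by
  obtain ⟨hms, hsm⟩ := Finset.mem_Ico.1 hs
  have hs₁ : (⌈L⌉₊ : ℝ) + 1 ≤ s := by exact_mod_cast hms
  have hs₂ : (s : ℝ) + 1 ≤ 2 * (⌈L⌉₊ + 1) := by exact_mod_cast hsm
  have hLm : L ≤ ⌈L⌉₊ := Nat.le_ceil L
  have hmL : (⌈L⌉₊ : ℝ) < L + 1 := Nat.ceil_lt_add_one hL.le
  rw [Nat.cast_sub (by omega), Nat.cast_one, Set.mem_Icc, le_div_iff₀ hL, div_le_iff₀ hL,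
    add_mul, div_mul_cancel₀ _ hL.ne']
  constructor <;> linarith

lemma unionBoundTerm_le_exp {N D : ℕ} (hD : 0 < D) {μ c : ℝ} (hμ : 0 < μ)
    (hL : 0 < Real.log N) {s : ℕ} (hs : 3 ≤ s)
    (hc : ((s - 1 : ℕ) : ℝ) / Real.log N *
      Real.log (Real.exp 2 * μ / 2 * (((s - 1 : ℕ) : ℝ) / Real.log N)) ≤ c) :
    unionBoundTerm N D (μ / (D * Real.log N)) s ≤ Real.exp 7 * Real.exp ((1 + c) * Real.log N) := by
  have hN : (0 : ℝ) < N := one_pos.trans ((Real.log_pos_iff (Nat.cast_nonneg N)).1 hL)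
  calc _ ≤ N * (Real.exp 7 * (Real.exp 2 * μ / 2 * ((s - 1 : ℕ) / Real.log N)) ^ (s - 1)) :=
        unionBoundTerm_le hD hμ.le hL hs
    _ ≤ N * (Real.exp 7 * Real.exp (c * Real.log N)) := by
        gcongr
        exact pow_le_exp_of_mul_log_le (by positivity) hL hc
    _ = Real.exp 7 * Real.exp ((1 + c) * Real.log N) := by
        rw [add_mul, one_mul, Real.exp_add, Real.exp_log hN]; ring

variable {V : Type*} [Fintype V] {G : SimpleGraph V} {D : ℕ}

lemma solveProb_le_exp_log (hdeg : ∀ u, G.degree u ≤ D) (hD : 2 ≤ D) {μ c : ℝ} (hμ0 : 0 < μ)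
    (hμ1 : μ ≤ 1) (hL : 2 ≤ Real.log (Fintype.card V))
    (hc : ∀ u ∈ Set.Icc (1 : ℝ) (2 + 2 / Real.log (Fintype.card V)),
      u * Real.log (Real.exp 2 * μ / 2 * u) ≤ c) :
    solveProb G 1 1 ⊤ (μ / (D * Real.log (Fintype.card V))) ≤
      Real.exp 7 * ((Real.log (Fintype.card V) + 2) *
        Real.exp ((1 + c) * Real.log (Fintype.card V))) := by
  set N := Fintype.card V
  set L := Real.log N
  have hD' : (2 : ℝ) ≤ D := by exact_mod_cast hD
  set m := ⌈L⌉₊ + 1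
  have hmL : (m : ℝ) < L + 2 := by
    simp only [m, Nat.cast_add, Nat.cast_one]; linarith [Nat.ceil_lt_add_one (by linarith : 0 ≤ L)]
  have hm : 3 ≤ m := by
    have : (2 : ℝ) ≤ ⌈L⌉₊ := hL.trans (Nat.le_ceil L)
    have : 2 ≤ ⌈L⌉₊ := by exact_mod_cast this
    omega
  have hmN : m ≤ N := by
    have hN : (0 : ℝ) < N :=
      one_pos.trans ((Real.log_pos_iff (Nat.cast_nonneg N)).1 (by linarith))
    have : ⌈L⌉₊ ≤ N - 1 := Nat.ceil_le.2 (by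
      rw [Nat.cast_sub (by exact_mod_cast hN), Nat.cast_one]
      exact Real.log_le_sub_one_of_pos hN)
    omega
  have hp0 : 0 ≤ μ / (D * L) := by positivity
  have hp1 : μ / (D * L) ≤ 1 := by
    rw [div_le_one (by positivity)]; nlinarith
  calc solveProb G 1 1 ⊤ (μ / (D * L))
      ≤ ∑ s ∈ Finset.Ico m (2 * m), unionBoundTerm N D (μ / (D * L)) s :=
        solveProb_le_sum hdeg hD hp0 hp1 (by omega) hmN
    _ ≤ ∑ _s ∈ Finset.Ico m (2 * m), Real.exp 7 * Real.exp ((1 + c) * L) :=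
        Finset.sum_le_sum fun s hs => unionBoundTerm_le_exp (by omega) hμ0 (by linarith)
          (by have := (Finset.mem_Ico.1 hs).1; omega)
          (hc _ (cast_sub_one_div_mem_Icc (by linarith) hs))
    _ ≤ (L + 2) * (Real.exp 7 * Real.exp ((1 + c) * L)) := by
        rw [Finset.sum_const, Nat.card_Ico, show 2 * m - m = m by omega, nsmul_eq_mul]
        gcongr
    _ = _ := by ring_nf

end Bound

theorem stmt0_general (G : (N : ℕ) → SimpleGraph (Fin N)) (D : ℕ → ℕ)
    (hconn : ∀ N, 1 ≤ N → (G N).Connected)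
    (hdeg : ∀ N (v : Fin N), ((G N).neighborSet v).ncard ≤ D N)
    (μ η : ℝ) (hμpos : 0 < μ)
    (hη : Filter.limsup (fun N : ℕ => Real.log (D N) / Real.log N) atTop = η)
    (hμ : μ < min (2 * Real.exp (-(3 + η))) (Real.exp (-(5 + η) / 2))) :
    Tendsto (fun N : ℕ => solveProb (G N) 1 1 ⊤ (μ / (D N * Real.log N)))
      atTop (nhds 0) := by
  have hη0 : 0 ≤ η := hη ▸ limsup_nonneg_of_nonneg fun N =>
    div_nonneg (Real.log_natCast_nonneg _) (Real.log_natCast_nonneg _)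
  have h₁ : Real.exp 2 * μ / 2 < Real.exp (-1) := by
    have : μ < 2 * Real.exp (-3) :=
      (hμ.trans_le (min_le_left _ _)).trans_le (by gcongr; linarith)
    calc Real.exp 2 * μ / 2 < Real.exp 2 * Real.exp (-3) := by nlinarith [Real.exp_pos 2]
      _ = Real.exp (-1) := by rw [← Real.exp_add]; norm_num
  have h₂ : 2 * (Real.exp 2 * μ / 2) < Real.exp (-1 / 2) := by
    have : μ < Real.exp (-5 / 2) :=
      (hμ.trans_le (min_le_right _ _)).trans_le (by gcongr; linarith)
    calc 2 * (Real.exp 2 * μ / 2) < Real.exp 2 * Real.exp (-5 / 2) := by nlinarith [Real.exp_pos 2]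
      _ = Real.exp (-1 / 2) := by rw [← Real.exp_add]; norm_num
  have hμ1 : μ ≤ 1 := by
    linarith [hμ.trans_le (min_le_right _ _),
      Real.exp_le_one_iff.2 (by linarith : -(5 + η) / 2 ≤ 0)]
  obtain ⟨c, hc, hcL⟩ := exists_mul_log_le (by positivity) h₁ h₂
  have hlog := Real.tendsto_log_atTop.comp (tendsto_natCast_atTop_atTop (R := ℝ))
  have hbound : ∀ᶠ N : ℕ in atTop, 0 ≤ solveProb (G N) 1 1 ⊤ (μ / (D N * Real.log N)) ∧
      solveProb (G N) 1 1 ⊤ (μ / (D N * Real.log N)) ≤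
        Real.exp 7 * ((Real.log N + 2) * Real.exp ((1 + c) * Real.log N)) := by
    filter_upwards [eventually_ge_atTop 3, hlog.eventually (eventually_ge_atTop 2),
      hlog.eventually hcL] with N hN hL hcN
    have hdeg' : ∀ v, (G N).degree v ≤ D N := fun v => ncard_neighborSet_eq_degree _ v ▸ hdeg N v
    have hD := (hconn N (by omega)).two_le_of_degree_le (by simpa using hN) hdeg'
    have := solveProb_le_exp_log hdeg' hD hμpos hμ1 (by simpa using hL) (by simpa using hcN)
    simp only [Fintype.card_fin] at this
    refine ⟨erProb_nonneg (by positivity) ?_ _, this⟩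
    rw [div_le_one (by positivity)]
    have : (2 : ℝ) ≤ D N := by exact_mod_cast hD
    have : (2 : ℝ) ≤ Real.log N := hL
    nlinarith
  exact squeeze_zero' (hbound.mono fun _ h => h.1) (hbound.mono fun _ h => h.2)
    (by simpa using (tendsto_log_add_two_mul_exp_neg (by linarith : 0 < -(1 + c))).const_mul _)

/-- Theorem A / Theorem 3.1: for AE jigsaw percolation on a sequence of
connected puzzle graphs with `N` vertices and maximum degree at most `D(N)`, with
Erdős–Rényi people graph of edge probability `p = μ/(D log N)`, if
`μ < min {2e^{-(3+η)}, e^{-(5+η)/2}}` where `η = limsup (log D / log N)`, then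
`P_p(Solve) → 0` as `N → ∞`. -/
theorem stmt0 (G : (N : ℕ) → SimpleGraph (Fin N)) (D : ℕ → ℕ)
    (hD : ∀ N, 1 ≤ D N)
    (hconn : ∀ N, 1 ≤ N → (G N).Connected)
    (hdeg : ∀ N (v : Fin N), ((G N).neighborSet v).ncard ≤ D N)
    (μ η : ℝ) (hμpos : 0 < μ)
    (hη : Filter.limsup (fun N : ℕ => Real.log (D N) / Real.log N) atTop = η)
    (hμ : μ < min (2 * Real.exp (-(3 + η))) (Real.exp (-(5 + η) / 2))) :
    Tendsto (fun N : ℕ => solveProb (G N) 1 1 ⊤ (μ / (D N * Real.log N)))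
      atTop (nhds 0) :=
  stmt0_general G D hconn hdeg μ η hμpos hη hμ

end JigsawPerc
end
end

section
/- Let G be a finite graph with maximum degree at most D, where D ≥ 1, and let v be a vertex of G. For every k ≥ 1, the number of vertex subsets A with v ∈ A, |A| = k, and the induced subgraph G^A connected, is at most (eD)^k. -/
open scoped Classical
open Filter

noncomputable section

namespace JigsawPerc

variable {V : Type*}

namespace Stmt12Aux

variable {V : Type*}

noncomputable def stepv (G : SimpleGraph V) {D : ℕ} (lab : V → V → Fin D) (u : V) (j : ℕ) : V :=
  if h : ∃ w, w ∈ G.neighborSet u ∧ ((lab u w : ℕ) = j) then h.choose else u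

lemma stepv_eq {G : SimpleGraph V} {D : ℕ} {lab : V → V → Fin D}
    (hlab : ∀ x, Set.InjOn (lab x) (G.neighborSet x)) {u w : V} (hw : w ∈ G.neighborSet u) :
    stepv G lab u (lab u w : ℕ) = w := by
  have h : ∃ w', w' ∈ G.neighborSet u ∧ ((lab u w' : ℕ) = (lab u w : ℕ)) := ⟨w, hw, rfl⟩
  rw [stepv, dif_pos h]
  obtain ⟨h1, h2⟩ := h.choose_spec
  exact hlab u h1 hw (Fin.val_injective h2)

noncomputable def follow (G : SimpleGraph V) {D : ℕ} (lab : V → V → Fin D) (v : V)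
    (l : List (Fin D)) : V :=
  l.foldl (fun u j => stepv G lab u (j : ℕ)) v

@[simp] lemma follow_nil (G : SimpleGraph V) {D : ℕ} (lab : V → V → Fin D) (v : V) :
    follow G lab v [] = v := rfl

lemma follow_concat (G : SimpleGraph V) {D : ℕ} (lab : V → V → Fin D) (v : V)
    (l : List (Fin D)) (j : Fin D) :
    follow G lab v (l ++ [j]) = stepv G lab (follow G lab v l) (j : ℕ) := by
  simp [follow, List.foldl_append]

def code (D : ℕ) (l : List (Fin D)) : ℕ :=
  l.foldl (fun n j => n * (D + 1) + ((j : ℕ) + 1)) 0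

@[simp] lemma code_nil (D : ℕ) : code D ([] : List (Fin D)) = 0 := rfl

lemma code_foldl (D : ℕ) (n : ℕ) (l : List (Fin D)) (j : Fin D) :
    List.foldl (fun n (j : Fin D) => n * (D + 1) + ((j : ℕ) + 1)) n (l ++ [j])
      = (List.foldl (fun n (j : Fin D) => n * (D + 1) + ((j : ℕ) + 1)) n l) * (D + 1)
        + ((j : ℕ) + 1) := by
  simp [List.foldl_append]

lemma code_concat (D : ℕ) (l : List (Fin D)) (j : Fin D) :
    code D (l ++ [j]) = code D l * (D + 1) + ((j : ℕ) + 1) := by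
  simpa [code] using code_foldl D 0 l j

lemma code_pos {D : ℕ} {l : List (Fin D)} (h : l ≠ []) : 0 < code D l := by
  obtain rfl | ⟨L, b, rfl⟩ := l.eq_nil_or_concat'
  · exact absurd rfl h
  · rw [code_concat]; omega

lemma digit_eq {D a a' : ℕ} {j j' : Fin D}
    (h : a * (D + 1) + ((j : ℕ) + 1) = a' * (D + 1) + ((j' : ℕ) + 1)) : a = a' ∧ j = j' := by
  have hj : (j : ℕ) + 1 < D + 1 := by omega
  have hj' : (j' : ℕ) + 1 < D + 1 := by omega
  have e1 : (a * (D + 1) + ((j : ℕ) + 1)) / (D + 1) = a := by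
    rw [Nat.mul_comm a, Nat.mul_add_div (Nat.succ_pos D), Nat.div_eq_of_lt hj, Nat.add_zero]
  have e2 : (a' * (D + 1) + ((j' : ℕ) + 1)) / (D + 1) = a' := by
    rw [Nat.mul_comm a', Nat.mul_add_div (Nat.succ_pos D), Nat.div_eq_of_lt hj', Nat.add_zero]
  have hd : a = a' := by rw [← e1, ← e2, h]
  subst hd
  have : (j : ℕ) = (j' : ℕ) := by omega
  exact ⟨rfl, Fin.val_injective this⟩

lemma code_inj (D : ℕ) : Function.Injective (code D) := by
  intro l
  induction l using List.reverseRecOn with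
  | nil =>
    intro l' h
    obtain rfl | ⟨L, b, rfl⟩ := l'.eq_nil_or_concat'
    · rfl
    · exfalso
      have := code_pos (D := D) (l := L ++ [b]) (by simp)
      rw [code_nil] at h
      omega
  | append_singleton L b ih =>
    intro l' h
    obtain rfl | ⟨L', b', rfl⟩ := l'.eq_nil_or_concat'
    · exfalso
      have := code_pos (D := D) (l := L ++ [b]) (by simp)
      rw [code_nil] at h
      omega
    · rw [code_concat, code_concat] at h
      obtain ⟨h1, h2⟩ := digit_eq h
      rw [ih h1, h2]

lemma base_lt {B a a' x x' : ℕ} (hx' : x' ≤ B) (h : a * B + x < a' * B + x') :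
    a < a' ∨ (a = a' ∧ x < x') := by
  rcases lt_trichotomy a a' with hl | hl | hl
  · exact Or.inl hl
  · subst hl; exact Or.inr ⟨rfl, by omega⟩
  · exfalso
    have h1 : (a' + 1) * B ≤ a * B := Nat.mul_le_mul_right B hl
    have : a' * B + x' ≤ a' * B + B := by omega
    nlinarith

def cand (G : SimpleGraph V) {D : ℕ} (lab : V → V → Fin D) (v : V) (A : Set V) (u : V) :
    Set (List (Fin D)) :=
  {w | follow G lab v w = u ∧ ∀ p, p <+: w → follow G lab v p ∈ A}

noncomputable def Wrd (G : SimpleGraph V) {D : ℕ} (lab : V → V → Fin D) (v : V) (A : Set V)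
    (u : V) : List (Fin D) :=
  if h : (code D '' cand G lab v A u).Nonempty then
    ((Set.mem_image _ _ _).mp (Nat.sInf_mem h)).choose
  else []

lemma Wrd_spec {G : SimpleGraph V} {D : ℕ} {lab : V → V → Fin D} {v : V} {A : Set V} {u : V}
    (h : (cand G lab v A u).Nonempty) :
    Wrd G lab v A u ∈ cand G lab v A u ∧
      code D (Wrd G lab v A u) = sInf (code D '' cand G lab v A u) := by
  have h' : (code D '' cand G lab v A u).Nonempty := h.image _
  rw [Wrd, dif_pos h']
  exact ((Set.mem_image _ _ _).mp (Nat.sInf_mem h')).choose_spec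

lemma Wrd_mem {G : SimpleGraph V} {D : ℕ} {lab : V → V → Fin D} {v : V} {A : Set V} {u : V}
    (h : (cand G lab v A u).Nonempty) : Wrd G lab v A u ∈ cand G lab v A u :=
  (Wrd_spec h).1

lemma Wrd_min {G : SimpleGraph V} {D : ℕ} {lab : V → V → Fin D} {v : V} {A : Set V} {u : V}
    (h : (cand G lab v A u).Nonempty) {w : List (Fin D)} (hw : w ∈ cand G lab v A u) :
    code D (Wrd G lab v A u) ≤ code D w := by
  rw [(Wrd_spec h).2]
  exact Nat.sInf_le (Set.mem_image_of_mem _ hw)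

lemma cand_concat {G : SimpleGraph V} {D : ℕ} {lab : V → V → Fin D} {v : V} {A : Set V}
    (hlab : ∀ x, Set.InjOn (lab x) (G.neighborSet x)) {a b : V}
    (hadj : G.Adj a b) (hb : b ∈ A) {w : List (Fin D)} (hw : w ∈ cand G lab v A a) :
    w ++ [lab a b] ∈ cand G lab v A b := by
  have hnb : b ∈ G.neighborSet a := hadj
  have hend : follow G lab v (w ++ [lab a b]) = b := by
    rw [follow_concat, hw.1, stepv_eq hlab hnb]
  refine ⟨hend, ?_⟩
  intro p hp
  rcases List.prefix_concat_iff.mp hp with rfl | hp'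
  · rw [hend]; exact hb
  · exact hw.2 p hp'

lemma cand_nonempty {G : SimpleGraph V} {D : ℕ} {lab : V → V → Fin D} {v : V} {A : Set V}
    (hlab : ∀ x, Set.InjOn (lab x) (G.neighborSet x)) (hv : v ∈ A)
    (hconn : (G.induce A).Connected) :
    ∀ u ∈ A, (cand G lab v A u).Nonempty := by
  have base : (cand G lab v A v).Nonempty := by
    refine ⟨[], rfl, ?_⟩
    intro p hp
    rw [List.prefix_nil.mp hp]
    exact hv
  have step : ∀ (a b : A), (G.induce A).Walk a b →
      (cand G lab v A a.1).Nonempty → (cand G lab v A b.1).Nonempty := by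
    intro a b w
    induction w with
    | nil => exact id
    | @cons a x b h p ih =>
      intro ha
      apply ih
      obtain ⟨w0, hw0⟩ := ha
      have hadj : G.Adj a.1 x.1 := h
      exact ⟨w0 ++ [lab a.1 x.1], cand_concat hlab hadj x.2 hw0⟩
  intro u hu
  obtain ⟨w⟩ := hconn.preconnected ⟨v, hv⟩ ⟨u, hu⟩
  exact step _ _ w base

lemma exists_lab [Fintype V] (G : SimpleGraph V) (D : ℕ) (hD : 1 ≤ D)
    (hdeg : ∀ u : V, (G.neighborSet u).ncard ≤ D) :
    ∃ lab : V → V → Fin D, ∀ x, Set.InjOn (lab x) (G.neighborSet x) := by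
  have H : ∀ x : V, ∃ f : V → Fin D, Set.InjOn f (G.neighborSet x) := by
    intro x
    haveI : Fintype (G.neighborSet x) := (Set.toFinite _).fintype
    have hcard : Fintype.card (G.neighborSet x) ≤ D := by
      rw [← Nat.card_eq_fintype_card, Nat.card_coe_set_eq]
      exact hdeg x
    set e := Fintype.equivFin (G.neighborSet x)
    refine ⟨fun w => if h : w ∈ G.neighborSet x then Fin.castLE hcard (e ⟨w, h⟩) else ⟨0, hD⟩, ?_⟩
    intro a ha b hb hab
    simp only [dif_pos ha, dif_pos hb] at hab
    have := e.injective (Fin.castLE_injective hcard hab)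
    exact congrArg Subtype.val this
  choose lab hlab using H
  exact ⟨lab, hlab⟩

noncomputable def cA (G : SimpleGraph V) {D : ℕ} (lab : V → V → Fin D) (v : V) (A : Set V)
    (u : V) : ℕ :=
  code D (Wrd G lab v A u)

noncomputable def idxA [Fintype V] (G : SimpleGraph V) {D : ℕ} (lab : V → V → Fin D) (v : V)
    (A : Set V) (u : V) : ℕ :=
  (A.toFinset.filter fun u' => cA G lab v A u' < cA G lab v A u).card

noncomputable def parA (G : SimpleGraph V) {D : ℕ} (lab : V → V → Fin D) (v : V) (A : Set V)
    (u : V) : V :=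
  follow G lab v (Wrd G lab v A u).dropLast

noncomputable def slotA [Fintype V] (G : SimpleGraph V) {D : ℕ} (lab : V → V → Fin D) (v : V)
    (A : Set V) (d : Fin D) (u : V) : ℕ :=
  idxA G lab v A (parA G lab v A u) * D + ((Wrd G lab v A u).getLastD d : ℕ)

noncomputable def vertA [Fintype V] (G : SimpleGraph V) {D : ℕ} (lab : V → V → Fin D) (v : V)
    (A : Set V) (m : ℕ) : V :=
  if h : ∃ u ∈ A, idxA G lab v A u = m then h.choose else v

noncomputable def seqOf (G : SimpleGraph V) (D : ℕ) (lab : V → V → Fin D) (v : V)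
    (f : ℕ → ℕ) : ℕ → V
  | 0 => v
  | m + 1 => stepv G lab (seqOf G D lab v f (min m (f (m + 1) / D))) (f (m + 1) % D)
  termination_by m => m
  decreasing_by omega

section Main

variable [Fintype V] {G : SimpleGraph V} {D : ℕ} {lab : V → V → Fin D} {v : V} {A : Set V}
  {u u' : V}

lemma follow_Wrd (hlab : ∀ x, Set.InjOn (lab x) (G.neighborSet x)) (hv : v ∈ A)
    (hconn : (G.induce A).Connected) (hu : u ∈ A) :
    follow G lab v (Wrd G lab v A u) = u :=
  (Wrd_mem (cand_nonempty hlab hv hconn u hu)).1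

lemma Wrd_prefix (hlab : ∀ x, Set.InjOn (lab x) (G.neighborSet x)) (hv : v ∈ A)
    (hconn : (G.induce A).Connected) (hu : u ∈ A) {p : List (Fin D)}
    (hp : p <+: Wrd G lab v A u) : follow G lab v p ∈ A :=
  (Wrd_mem (cand_nonempty hlab hv hconn u hu)).2 p hp

lemma cA_inj (hlab : ∀ x, Set.InjOn (lab x) (G.neighborSet x)) (hv : v ∈ A)
    (hconn : (G.induce A).Connected) (hu : u ∈ A) (hu' : u' ∈ A)
    (h : cA G lab v A u = cA G lab v A u') : u = u' := by
  have := code_inj D h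
  rw [← follow_Wrd hlab hv hconn hu, ← follow_Wrd hlab hv hconn hu', this]

lemma Wrd_v (hv : v ∈ A) : Wrd G lab v A v = [] := by
  have hc : ([] : List (Fin D)) ∈ cand G lab v A v := by
    refine ⟨rfl, ?_⟩
    intro p hp
    rw [List.prefix_nil.mp hp]
    exact hv
  have h0 : code D (Wrd G lab v A v) ≤ 0 := by
    simpa using Wrd_min ⟨[], hc⟩ hc
  by_contra hne
  exact absurd h0 (by have := code_pos (D := D) hne; omega)

lemma cA_v (hv : v ∈ A) : cA G lab v A v = 0 := by
  rw [cA, Wrd_v hv, code_nil]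

lemma Wrd_ne_nil (hlab : ∀ x, Set.InjOn (lab x) (G.neighborSet x)) (hv : v ∈ A)
    (hconn : (G.induce A).Connected) (hu : u ∈ A) (hne : u ≠ v) :
    Wrd G lab v A u ≠ [] := by
  intro h
  have := follow_Wrd hlab hv hconn hu
  rw [h, follow_nil] at this
  exact hne this.symm

lemma Wrd_par (hlab : ∀ x, Set.InjOn (lab x) (G.neighborSet x)) (hv : v ∈ A)
    (hconn : (G.induce A).Connected) (hu : u ∈ A) (hne : Wrd G lab v A u ≠ []) :
    parA G lab v A u ∈ A ∧
      Wrd G lab v A (parA G lab v A u) = (Wrd G lab v A u).dropLast := by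
  set w := Wrd G lab v A u with hwdef
  set l := w.dropLast with hldef
  set j := w.getLast hne with hjdef
  have hw : l ++ [j] = w := List.dropLast_append_getLast hne
  have hlpre : l <+: w := by rw [← hw]; exact List.prefix_append l [j]
  have hxA : parA G lab v A u ∈ A := Wrd_prefix hlab hv hconn hu hlpre
  have hpar : parA G lab v A u = follow G lab v l := rfl
  have hlc : l ∈ cand G lab v A (parA G lab v A u) :=
    ⟨hpar.symm, fun p hp => Wrd_prefix hlab hv hconn hu (hp.trans hlpre)⟩
  have hxnem := cand_nonempty hlab hv hconn _ hxA
  have hmin : code D (Wrd G lab v A (parA G lab v A u)) ≤ code D l := Wrd_min hxnem hlc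
  rcases hmin.lt_or_eq with hlt | heq
  · exfalso
    set wx := Wrd G lab v A (parA G lab v A u) with hwxdef
    have hfx : follow G lab v wx = parA G lab v A u := (Wrd_mem hxnem).1
    have hcand : wx ++ [j] ∈ cand G lab v A u := by
      have hend : follow G lab v (wx ++ [j]) = u := by
        rw [follow_concat, hfx, hpar, ← follow_concat, hw]
        exact follow_Wrd hlab hv hconn hu
      refine ⟨hend, ?_⟩
      intro p hp
      rcases List.prefix_concat_iff.mp hp with rfl | hp'
      · rw [hend]; exact hu
      · exact (Wrd_mem hxnem).2 p hp'
    have hle := Wrd_min (cand_nonempty hlab hv hconn u hu) hcand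
    rw [← hwdef] at hle
    have hcodes : code D (wx ++ [j]) < code D w := by
      rw [code_concat, ← hw, code_concat]
      have : code D wx * (D + 1) < code D l * (D + 1) := (Nat.mul_lt_mul_right (by omega)).mpr hlt
      omega
    omega
  · exact ⟨hxA, code_inj D heq⟩

lemma cA_par_lt (hlab : ∀ x, Set.InjOn (lab x) (G.neighborSet x)) (hv : v ∈ A)
    (hconn : (G.induce A).Connected) (hu : u ∈ A) (hne : Wrd G lab v A u ≠ []) :
    cA G lab v A (parA G lab v A u) < cA G lab v A u := by
  have h := (Wrd_par hlab hv hconn hu hne).2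
  rw [cA, cA, h]
  conv_rhs => rw [← List.dropLast_append_getLast hne]
  rw [code_concat]
  have : code D (Wrd G lab v A u).dropLast * (D + 1) ≥ code D (Wrd G lab v A u).dropLast :=
    Nat.le_mul_of_pos_right _ (by omega)
  omega

end Main

lemma getLastD_ne_nil {α : Type*} {l : List α} (h : l ≠ []) (d : α) :
    l.getLastD d = l.getLast h := by
  obtain rfl | ⟨L, b, rfl⟩ := l.eq_nil_or_concat'
  · exact absurd rfl h
  · rw [List.getLastD_concat]
    simp

section Rank

variable [Fintype V] {G : SimpleGraph V} {D : ℕ} {lab : V → V → Fin D} {v : V} {A : Set V}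
  {k m : ℕ} {u u' : V} {d : Fin D}

lemma idx_lt (hu : u ∈ A) (hk : A.ncard = k) : idxA G lab v A u < k := by
  have hcard : A.toFinset.card = k := by rw [← Set.ncard_eq_toFinset_card']; exact hk
  have hss : (A.toFinset.filter fun u' => cA G lab v A u' < cA G lab v A u) ⊂ A.toFinset := by
    refine (Finset.ssubset_iff_of_subset (Finset.filter_subset _ _)).mpr ?_
    exact ⟨u, Set.mem_toFinset.mpr hu, by simp⟩
  have := Finset.card_lt_card hss
  rw [hcard] at this
  exact this

lemma idx_mono (hu : u ∈ A) (h : cA G lab v A u < cA G lab v A u') :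
    idxA G lab v A u < idxA G lab v A u' := by
  apply Finset.card_lt_card
  have hsub : (A.toFinset.filter fun x => cA G lab v A x < cA G lab v A u) ⊆
      (A.toFinset.filter fun x => cA G lab v A x < cA G lab v A u') := by
    intro x hx
    rw [Finset.mem_filter] at *
    exact ⟨hx.1, hx.2.trans h⟩
  refine (Finset.ssubset_iff_of_subset hsub).mpr ?_
  exact ⟨u, Finset.mem_filter.mpr ⟨Set.mem_toFinset.mpr hu, h⟩, by simp⟩

lemma idx_inj' (hlab : ∀ x, Set.InjOn (lab x) (G.neighborSet x)) (hv : v ∈ A)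
    (hconn : (G.induce A).Connected) (hu : u ∈ A) (hu' : u' ∈ A)
    (h : idxA G lab v A u = idxA G lab v A u') : u = u' := by
  rcases lt_trichotomy (cA G lab v A u) (cA G lab v A u') with hc | hc | hc
  · exact absurd (idx_mono hu hc) (by omega)
  · exact cA_inj hlab hv hconn hu hu' hc
  · exact absurd (idx_mono hu' hc) (by omega)

lemma idx_reflects (hlab : ∀ x, Set.InjOn (lab x) (G.neighborSet x)) (hv : v ∈ A)
    (hconn : (G.induce A).Connected) (hu : u ∈ A) (hu' : u' ∈ A)
    (h : idxA G lab v A u < idxA G lab v A u') : cA G lab v A u < cA G lab v A u' := by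
  rcases lt_trichotomy (cA G lab v A u) (cA G lab v A u') with hc | hc | hc
  · exact hc
  · exact absurd (cA_inj hlab hv hconn hu hu' hc) (by rintro rfl; omega)
  · exact absurd (idx_mono hu' hc) (by omega)

lemma idx_v (hv : v ∈ A) : idxA G lab v A v = 0 := by
  rw [idxA, Finset.card_eq_zero, Finset.filter_eq_empty_iff]
  intro x _
  rw [cA_v hv]
  omega

lemma idx_surj (hlab : ∀ x, Set.InjOn (lab x) (G.neighborSet x)) (hv : v ∈ A)
    (hconn : (G.induce A).Connected) (hk : A.ncard = k) (hm : m < k) :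
    ∃ u ∈ A, idxA G lab v A u = m := by
  have hcard : A.toFinset.card = k := by rw [← Set.ncard_eq_toFinset_card']; exact hk
  have himg : A.toFinset.image (idxA G lab v A) = Finset.range k := by
    apply Finset.eq_of_subset_of_card_le
    · intro x hx
      obtain ⟨y, hy, rfl⟩ := Finset.mem_image.mp hx
      exact Finset.mem_range.mpr (idx_lt (Set.mem_toFinset.mp hy) hk)
    · rw [Finset.card_range, Finset.card_image_of_injOn, hcard]
      intro a ha b hb h
      exact idx_inj' hlab hv hconn (Set.mem_toFinset.mp ha) (Set.mem_toFinset.mp hb) h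
  have : m ∈ A.toFinset.image (idxA G lab v A) := by rw [himg]; exact Finset.mem_range.mpr hm
  obtain ⟨y, hy, hym⟩ := Finset.mem_image.mp this
  exact ⟨y, Set.mem_toFinset.mp hy, hym⟩

lemma vert_mem (hv : v ∈ A) (m : ℕ) : vertA G lab v A m ∈ A := by
  rw [vertA]
  split
  · next h => exact h.choose_spec.1
  · exact hv

lemma idx_vert (hlab : ∀ x, Set.InjOn (lab x) (G.neighborSet x)) (hv : v ∈ A)
    (hconn : (G.induce A).Connected) (hk : A.ncard = k) (hm : m < k) :
    idxA G lab v A (vertA G lab v A m) = m := by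
  have h := idx_surj hlab hv hconn hk hm
  rw [vertA, dif_pos h]
  exact h.choose_spec.2

lemma vert_idx (hlab : ∀ x, Set.InjOn (lab x) (G.neighborSet x)) (hv : v ∈ A)
    (hconn : (G.induce A).Connected) (hu : u ∈ A) :
    vertA G lab v A (idxA G lab v A u) = u := by
  have h : ∃ u' ∈ A, idxA G lab v A u' = idxA G lab v A u := ⟨u, hu, rfl⟩
  rw [vertA, dif_pos h]
  exact idx_inj' hlab hv hconn h.choose_spec.1 hu h.choose_spec.2

lemma slot_lt (hlab : ∀ x, Set.InjOn (lab x) (G.neighborSet x)) (hv : v ∈ A)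
    (hconn : (G.induce A).Connected) (hk : A.ncard = k) (hu : u ∈ A) (hne : u ≠ v) :
    slotA G lab v A d u < k * D := by
  have hWne := Wrd_ne_nil hlab hv hconn hu hne
  have hparA := (Wrd_par hlab hv hconn hu hWne).1
  have h1 : idxA G lab v A (parA G lab v A u) < k := idx_lt hparA hk
  have h2 : ((Wrd G lab v A u).getLastD d : ℕ) < D := Fin.is_lt _
  calc slotA G lab v A d u < (idxA G lab v A (parA G lab v A u) + 1) * D := by
        rw [slotA, Nat.add_mul, Nat.one_mul]; omega
    _ ≤ k * D := Nat.mul_le_mul_right D (by omega)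

lemma slot_mono (hlab : ∀ x, Set.InjOn (lab x) (G.neighborSet x)) (hv : v ∈ A)
    (hconn : (G.induce A).Connected) (hu : u ∈ A) (hu' : u' ∈ A)
    (hneu : u ≠ v) (hneu' : u' ≠ v) (h : idxA G lab v A u < idxA G lab v A u') :
    slotA G lab v A d u < slotA G lab v A d u' := by
  have hWne := Wrd_ne_nil hlab hv hconn hu hneu
  have hWne' := Wrd_ne_nil hlab hv hconn hu' hneu'
  have hc : cA G lab v A u < cA G lab v A u' := idx_reflects hlab hv hconn hu hu' h
  have hpar := Wrd_par hlab hv hconn hu hWne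
  have hpar' := Wrd_par hlab hv hconn hu' hWne'
  set l := (Wrd G lab v A u).dropLast with hl
  set j := (Wrd G lab v A u).getLast hWne with hj
  set l' := (Wrd G lab v A u').dropLast with hl'
  set j' := (Wrd G lab v A u').getLast hWne' with hj'
  have hw : l ++ [j] = Wrd G lab v A u := List.dropLast_append_getLast hWne
  have hw' : l' ++ [j'] = Wrd G lab v A u' := List.dropLast_append_getLast hWne'
  have hcc : code D l * (D + 1) + ((j : ℕ) + 1) < code D l' * (D + 1) + ((j' : ℕ) + 1) := by
    rw [← code_concat, ← code_concat, hw, hw']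
    exact hc
  have hcpar : cA G lab v A (parA G lab v A u) = code D l := by rw [cA, hpar.2]
  have hcpar' : cA G lab v A (parA G lab v A u') = code D l' := by rw [cA, hpar'.2]
  have hgd : (Wrd G lab v A u).getLastD d = j := getLastD_ne_nil hWne d
  have hgd' : (Wrd G lab v A u').getLastD d = j' := getLastD_ne_nil hWne' d
  rcases base_lt (by omega : (j' : ℕ) + 1 ≤ D + 1) hcc with hlt | ⟨heq, hjlt⟩
  · have hidx : idxA G lab v A (parA G lab v A u) < idxA G lab v A (parA G lab v A u') :=
      idx_mono hpar.1 (by rw [hcpar, hcpar']; exact hlt)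
    have hjD : (j : ℕ) < D := j.is_lt
    rw [slotA, slotA, hgd, hgd']
    calc idxA G lab v A (parA G lab v A u) * D + (j : ℕ)
        < (idxA G lab v A (parA G lab v A u) + 1) * D := by
          rw [Nat.add_mul, Nat.one_mul]; omega
      _ ≤ idxA G lab v A (parA G lab v A u') * D := Nat.mul_le_mul_right D (by omega)
      _ ≤ _ := Nat.le_add_right _ _
  · have hll : l = l' := code_inj D heq
    have hpp : parA G lab v A u = parA G lab v A u' := by
      rw [parA, parA, ← hl, ← hl', hll]
    rw [slotA, slotA, hgd, hgd', hpp]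
    omega

end Rank

noncomputable def encA [Fintype V] (G : SimpleGraph V) {D : ℕ} (lab : V → V → Fin D)
    (v : V) (A : Set V) (d : Fin D) : Finset ℕ :=
  (A.toFinset.erase v).image (slotA G lab v A d)

noncomputable def decA (G : SimpleGraph V) (D : ℕ) (lab : V → V → Fin D) (v : V) (k : ℕ)
    (S : Finset ℕ) : Set V :=
  {u | ∃ m < k, seqOf G D lab v (fun m => (S.sort (· ≤ ·)).getD (m - 1) 0) m = u}

section Decode

variable [Fintype V] {G : SimpleGraph V} {D : ℕ} {lab : V → V → Fin D} {v : V} {A : Set V}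
  {k : ℕ} {d : Fin D}

lemma vert_ne_v (hlab : ∀ x, Set.InjOn (lab x) (G.neighborSet x)) (hv : v ∈ A)
    (hconn : (G.induce A).Connected) (hk : A.ncard = k) {m : ℕ} (hm : m + 1 < k) :
    vertA G lab v A (m + 1) ≠ v := by
  intro h
  have h1 : idxA G lab v A (vertA G lab v A (m + 1)) = m + 1 := idx_vert hlab hv hconn hk hm
  rw [h, idx_v hv] at h1
  omega

lemma enc_card (hlab : ∀ x, Set.InjOn (lab x) (G.neighborSet x)) (hv : v ∈ A)
    (hconn : (G.induce A).Connected) (hk : A.ncard = k) :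
    (encA G lab v A d).card = k - 1 := by
  have hcard : A.toFinset.card = k := by rw [← Set.ncard_eq_toFinset_card']; exact hk
  rw [encA, Finset.card_image_of_injOn, Finset.card_erase_of_mem (Set.mem_toFinset.mpr hv), hcard]
  intro a ha b hb hab
  rw [Finset.mem_coe, Finset.mem_erase, Set.mem_toFinset] at ha hb
  rcases lt_trichotomy (idxA G lab v A a) (idxA G lab v A b) with hlt | heq | hlt
  · exact absurd (slot_mono (d := d) hlab hv hconn ha.2 hb.2 ha.1 hb.1 hlt) (by omega)
  · exact idx_inj' hlab hv hconn ha.2 hb.2 heq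
  · exact absurd (slot_mono (d := d) hlab hv hconn hb.2 ha.2 hb.1 ha.1 hlt) (by omega)

lemma enc_sort_get (hlab : ∀ x, Set.InjOn (lab x) (G.neighborSet x)) (hv : v ∈ A)
    (hconn : (G.induce A).Connected) (hk : A.ncard = k) {m : ℕ} (hm : m < k - 1) :
    ((encA G lab v A d).sort (· ≤ ·)).getD m 0
      = slotA G lab v A d (vertA G lab v A (m + 1)) := by
  have hcard : (encA G lab v A d).card = k - 1 := enc_card hlab hv hconn hk
  set g : Fin (k - 1) → ℕ := fun i => slotA G lab v A d (vertA G lab v A ((i : ℕ) + 1)) with hg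
  have hmem : ∀ i, g i ∈ encA G lab v A d := by
    intro i
    have hik : (i : ℕ) + 1 < k := by have := i.is_lt; omega
    have hne := vert_ne_v hlab hv hconn hk hik
    exact Finset.mem_image_of_mem _
      (Finset.mem_erase.mpr ⟨hne, Set.mem_toFinset.mpr (vert_mem hv _)⟩)
  have hmono : StrictMono g := by
    intro i i' hii
    have hik : (i : ℕ) + 1 < k := by have := i.is_lt; omega
    have hik' : (i' : ℕ) + 1 < k := by have := i'.is_lt; omega
    refine slot_mono hlab hv hconn (vert_mem hv _) (vert_mem hv _)
      (vert_ne_v hlab hv hconn hk hik) (vert_ne_v hlab hv hconn hk hik') ?_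
    rw [idx_vert hlab hv hconn hk hik, idx_vert hlab hv hconn hk hik']
    omega
  have huniq := Finset.orderEmbOfFin_unique hcard hmem hmono
  have hlen : m < ((encA G lab v A d).sort (· ≤ ·)).length := by
    rw [Finset.length_sort, hcard]; exact hm
  rw [List.getD_eq_getElem _ _ hlen]
  exact ((congrFun huniq ⟨m, hm⟩).trans (Finset.orderEmbOfFin_apply _ hcard ⟨m, hm⟩)).symm

lemma seq_eq_vert (hlab : ∀ x, Set.InjOn (lab x) (G.neighborSet x)) (hv : v ∈ A)
    (hconn : (G.induce A).Connected) (hk : A.ncard = k) :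
    ∀ m, m < k →
      seqOf G D lab v (fun m => ((encA G lab v A d).sort (· ≤ ·)).getD (m - 1) 0) m
        = vertA G lab v A m := by
  intro m
  induction m using Nat.strong_induction_on with
  | _ m ih =>
    match m with
    | 0 =>
      intro _
      have h0 : vertA G lab v A 0 = v := by
        have := vert_idx hlab hv hconn hv
        rwa [idx_v hv] at this
      rw [seqOf, h0]
    | m + 1 =>
      intro hmk
      set u := vertA G lab v A (m + 1) with hu
      have huA : u ∈ A := vert_mem hv _
      have hune : u ≠ v := vert_ne_v hlab hv hconn hk hmk
      have hWne := Wrd_ne_nil hlab hv hconn huA hune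
      have hpar := Wrd_par hlab hv hconn huA hWne
      set j := (Wrd G lab v A u).getLast hWne with hj
      have hD0 : 0 < D := j.pos
      have hsl : ((encA G lab v A d).sort (· ≤ ·)).getD (m + 1 - 1) 0 = slotA G lab v A d u := by
        have : m < k - 1 := by omega
        simpa using enc_sort_get hlab hv hconn hk this
      have hslot : slotA G lab v A d u = idxA G lab v A (parA G lab v A u) * D + (j : ℕ) := by
        rw [slotA, getLastD_ne_nil hWne]
      have hdiv : slotA G lab v A d u / D = idxA G lab v A (parA G lab v A u) := by
        rw [hslot, Nat.mul_comm, Nat.mul_add_div hD0, Nat.div_eq_of_lt j.is_lt, Nat.add_zero]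
      have hmod : slotA G lab v A d u % D = (j : ℕ) := by
        rw [hslot, Nat.mul_comm, Nat.mul_add_mod, Nat.mod_eq_of_lt j.is_lt]
      have hidxu : idxA G lab v A u = m + 1 := idx_vert hlab hv hconn hk hmk
      have hidxlt : idxA G lab v A (parA G lab v A u) < m + 1 := by
        have hclt := cA_par_lt hlab hv hconn huA hWne
        have := idx_mono hpar.1 hclt
        omega
      rw [seqOf, hsl, hdiv, hmod]
      have hmin : min m (idxA G lab v A (parA G lab v A u)) = idxA G lab v A (parA G lab v A u) :=
        Nat.min_eq_right (by omega)
      rw [hmin, ih _ (by omega) (by omega)]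
      have hvp : vertA G lab v A (idxA G lab v A (parA G lab v A u)) = parA G lab v A u :=
        vert_idx hlab hv hconn hpar.1
      rw [hvp]
      have : stepv G lab (parA G lab v A u) (j : ℕ)
          = follow G lab v ((Wrd G lab v A u).dropLast ++ [j]) := by
        rw [follow_concat]; rfl
      rw [this, List.dropLast_append_getLast hWne]
      exact follow_Wrd hlab hv hconn huA

lemma dec_enc (hlab : ∀ x, Set.InjOn (lab x) (G.neighborSet x)) (hv : v ∈ A)
    (hconn : (G.induce A).Connected) (hk : A.ncard = k) :
    decA G D lab v k (encA G lab v A d) = A := by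
  ext u
  constructor
  · rintro ⟨m, hm, rfl⟩
    rw [seq_eq_vert hlab hv hconn hk m hm]
    exact vert_mem hv _
  · intro hu
    refine ⟨idxA G lab v A u, idx_lt hu hk, ?_⟩
    rw [seq_eq_vert hlab hv hconn hk _ (idx_lt hu hk)]
    exact vert_idx hlab hv hconn hu

end Decode

theorem main_count [Fintype V] (G : SimpleGraph V) (D : ℕ) (hD : 1 ≤ D)
    (hdeg : ∀ u : V, (G.neighborSet u).ncard ≤ D) (v : V) (k : ℕ) :
    {A : Set V | v ∈ A ∧ A.ncard = k ∧ (G.induce A).Connected}.ncard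
      ≤ (k * D).choose (k - 1) := by
  classical
  obtain ⟨lab, hlab⟩ := exists_lab G D hD hdeg
  set d : Fin D := ⟨0, hD⟩ with hd
  have hmaps : ∀ A ∈ {A : Set V | v ∈ A ∧ A.ncard = k ∧ (G.induce A).Connected},
      encA G lab v A d ∈ ↑((Finset.range (k * D)).powersetCard (k - 1)) := by
    rintro A ⟨hv, hkA, hconn⟩
    rw [Finset.mem_powersetCard]
    constructor
    · intro x hx
      rw [encA, Finset.mem_image] at hx
      obtain ⟨u, hu, rfl⟩ := hx
      rw [Finset.mem_erase, Set.mem_toFinset] at hu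
      exact Finset.mem_range.mpr (slot_lt hlab hv hconn hkA hu.2 hu.1)
    · exact enc_card hlab hv hconn hkA
  have hinj : Set.InjOn (fun A => encA G lab v A d)
      {A : Set V | v ∈ A ∧ A.ncard = k ∧ (G.induce A).Connected} := by
    rintro A1 ⟨hv1, hk1, hc1⟩ A2 ⟨hv2, hk2, hc2⟩ he
    simp only at he
    rw [← dec_enc (d := d) hlab hv1 hc1 hk1, ← dec_enc (d := d) hlab hv2 hc2 hk2, he]
  have hfin : (↑((Finset.range (k * D)).powersetCard (k - 1)) : Set (Finset ℕ)).Finite :=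
    Finset.finite_toSet _
  have := Set.ncard_le_ncard_of_injOn
    (t := (↑((Finset.range (k * D)).powersetCard (k - 1)) : Set (Finset ℕ)))
    (fun A => encA G lab v A d) hmaps hinj hfin
  rwa [Set.ncard_coe_finset, Finset.card_powersetCard, Finset.card_range] at this

lemma choose_le_exp_pow {D k : ℕ} (hD : 1 ≤ D) (hk : 1 ≤ k) :
    (((k * D).choose (k - 1) : ℝ)) ≤ (Real.exp 1 * D) ^ k := by
  have h1 : (((k * D).choose (k - 1) : ℝ))
      ≤ ((k * D : ℕ) : ℝ) ^ (k - 1) / ((k - 1).factorial : ℝ) :=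
    Nat.choose_le_pow_div (k - 1) (k * D)
  have hkR : (1 : ℝ) ≤ (k : ℝ) := by exact_mod_cast hk
  have hDR : (1 : ℝ) ≤ (D : ℝ) := by exact_mod_cast hD
  have hfact : ((k.factorial : ℕ) : ℝ) = (k : ℝ) * (((k - 1).factorial : ℕ) : ℝ) := by
    exact_mod_cast congrArg (Nat.cast (R := ℝ)) (Nat.mul_factorial_pred (by omega)).symm
  have hpow : (k : ℝ) ^ k = (k : ℝ) ^ (k - 1) * (k : ℝ) := by
    have h := (pow_succ (k : ℝ) (k - 1)).symm
    rw [h, Nat.sub_add_cancel hk]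
  have hexp : (k : ℝ) ^ k / ((k.factorial : ℕ) : ℝ) ≤ Real.exp 1 ^ k := by
    have hs := Real.sum_le_exp_of_nonneg (x := (k : ℝ)) (by positivity) (k + 1)
    have hterm : (k : ℝ) ^ k / ((k.factorial : ℕ) : ℝ)
        ≤ ∑ i ∈ Finset.range (k + 1), (k : ℝ) ^ i / ((i.factorial : ℕ) : ℝ) :=
      Finset.single_le_sum (f := fun i => (k : ℝ) ^ i / ((i.factorial : ℕ) : ℝ))
        (fun i _ => by positivity) (Finset.self_mem_range_succ k)
    have hone : Real.exp 1 ^ k = Real.exp (k : ℝ) := by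
      rw [← Real.exp_nat_mul, mul_one]
    rw [hone]
    exact hterm.trans hs
  have hfne : (((k - 1).factorial : ℕ) : ℝ) ≠ 0 := by
    exact_mod_cast (Nat.factorial_pos (k - 1)).ne'
  have hkne : (k : ℝ) ≠ 0 := by positivity
  have h2 : ((k * D : ℕ) : ℝ) ^ (k - 1) / (((k - 1).factorial : ℕ) : ℝ)
      = (D : ℝ) ^ (k - 1) * ((k : ℝ) ^ k / ((k.factorial : ℕ) : ℝ)) := by
    push_cast
    rw [mul_pow, hpow, hfact]
    push_cast
    field_simp
  have h3 : (D : ℝ) ^ (k - 1) * ((k : ℝ) ^ k / ((k.factorial : ℕ) : ℝ))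
      ≤ (D : ℝ) ^ k * Real.exp 1 ^ k := by
    have e1 : (D : ℝ) ^ (k - 1) ≤ (D : ℝ) ^ k := by
      apply pow_le_pow_right₀ hDR
      omega
    have e2 : (0 : ℝ) ≤ (k : ℝ) ^ k / ((k.factorial : ℕ) : ℝ) := by positivity
    exact mul_le_mul e1 hexp e2 (by positivity)
  have h4 : (Real.exp 1 * (D : ℝ)) ^ k = (D : ℝ) ^ k * Real.exp 1 ^ k := by
    rw [mul_pow]; ring
  rw [h4]
  calc (((k * D).choose (k - 1) : ℝ))
      ≤ ((k * D : ℕ) : ℝ) ^ (k - 1) / (((k - 1).factorial : ℕ) : ℝ) := h1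
    _ = (D : ℝ) ^ (k - 1) * ((k : ℝ) ^ k / ((k.factorial : ℕ) : ℝ)) := h2
    _ ≤ (D : ℝ) ^ k * Real.exp 1 ^ k := h3

end Stmt12Aux


/-- Lemma 3.3: if `G` has maximum degree at most `D ≥ 1` and `v` is a
vertex, then for every `k ≥ 1` the number of connected vertex subsets of size `k`
containing `v` is at most `(eD)^k`. -/
theorem stmt12 {V : Type*} [Fintype V] (G : SimpleGraph V) (D : ℕ) (hD : 1 ≤ D)
    (hdeg : ∀ v : V, (G.neighborSet v).ncard ≤ D) (v : V) (k : ℕ) (hk : 1 ≤ k) :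
    ({A : Set V | v ∈ A ∧ A.ncard = k ∧ (G.induce A).Connected}.ncard : ℝ) ≤
      (Real.exp 1 * D) ^ k := by
  have h1 := Stmt12Aux.main_count G D hD hdeg v k
  calc ({A : Set V | v ∈ A ∧ A.ncard = k ∧ (G.induce A).Connected}.ncard : ℝ)
      ≤ (((k * D).choose (k - 1) : ℕ) : ℝ) := by exact_mod_cast h1
    _ ≤ (Real.exp 1 * D) ^ k := Stmt12Aux.choose_le_exp_pow hD hk

end JigsawPerc
end
end

section
/- Consider AE jigsaw percolation on a connected puzzle graph G_puz with N vertices and maximum degree at most D, and Erdős–Rényi people graph with edge probability p = μ/(D log N) where 0 < μ < 2D/α. Suppose A ⊆ V is a set of vertices with |A| = α log N such that the induced subgraph G_puz^A is connected. Then P_p(Solve_A) ≤ (2D/(αμ)) · N^{α(1 − αμ/(2D) − log(2D/(αμ)))}. -/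
open scoped Classical
open Filter

noncomputable section

namespace JigsawPerc

variable {V : Type*}

/-!
With `σ ≥ 1` and `θ = ∞` every merge is witnessed by a people edge between the two parts, so
each part of the dynamics lies in a single connected component of the people graph. Solving `A`
therefore forces the people graph induced on `A` to be connected, hence to contain at least
`|A| - 1` of the `|A|(|A| - 1)/2` possible edges inside `A`. An exponential Markov (Chernoff)
bound with tilt `1/q`, where `|A| p = 2q`, bounds the probability of this by
`q^(|A|-1) e^((|A|-1)(1-q))`, which is the claimed estimate once `|A| = α log N`.
-/

section Dynamics

variable {W : Type*} {Gp Gl : SimpleGraph W} {σ τ : ℕ}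

theorem partAt_succ (Gp Gl : SimpleGraph W) (σ τ : ℕ) (θ : ℕ∞) (t : ℕ) :
    partAt Gp Gl σ τ θ (t + 1) = step Gp Gl σ τ θ (partAt Gp Gl σ τ θ t) :=
  Function.iterate_succ_apply' _ _ _

theorem LinkedDir.exists_adj (hσ : 1 ≤ σ) {X Y : Set W} (h : LinkedDir Gp Gl σ τ ⊤ X Y) :
    ∃ x ∈ X, ∃ y ∈ Y, Gl.Adj x y := by
  rcases h with ⟨x, hx, y, hy, hxy, -⟩ | ⟨x, -, hθ⟩ | ⟨x, hx, hσx, -⟩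
  · exact ⟨x, hx, y, hy, hxy⟩
  · exact absurd (top_le_iff.mp hθ) (ENat.natCast_ne_top _)
  · obtain ⟨y, hy, hxy⟩ := Set.nonempty_of_ncard_ne_zero (by omega : nbrCount Gl x Y ≠ 0)
    exact ⟨x, hx, y, hy, hxy⟩

theorem Linked.exists_adj (hσ : 1 ≤ σ) {X Y : Set W} (h : Linked Gp Gl σ τ ⊤ X Y) :
    ∃ x ∈ X, ∃ y ∈ Y, Gl.Adj x y := by
  rcases h.2 with h | h
  · exact h.exists_adj hσ
  · obtain ⟨y, hy, x, hx, hyx⟩ := h.exists_adj hσ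
    exact ⟨x, hx, y, hy, hyx.symm⟩

theorem exists_image_eq_singleton_of_mem_step (hσ : 1 ≤ σ) {P : Set (Set W)}
    (hP : ∀ U ∈ P, ∃ c, Gl.connectedComponentMk '' U = {c}) :
    ∀ U ∈ step Gp Gl σ τ ⊤ P, ∃ c, Gl.connectedComponentMk '' U = {c} := by
  rintro _ ⟨U₀, hU₀, rfl⟩
  obtain ⟨c, hc⟩ := hP U₀ hU₀
  have linked_image_eq : ∀ X Y, X ∈ P ∧ Y ∈ P ∧ Linked Gp Gl σ τ ⊤ X Y →
      Gl.connectedComponentMk '' X = Gl.connectedComponentMk '' Y := by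
    rintro X Y ⟨hX, hY, hXY⟩
    obtain ⟨x, hx, y, hy, hxy⟩ := hXY.exists_adj hσ
    obtain ⟨cX, hcX⟩ := hP X hX
    obtain ⟨cY, hcY⟩ := hP Y hY
    have hx' : Gl.connectedComponentMk x = cX := hcX.subset (Set.mem_image_of_mem _ hx)
    have hy' : Gl.connectedComponentMk y = cY := hcY.subset (Set.mem_image_of_mem _ hy)
    rw [hcX, hcY, ← hx', ← hy', SimpleGraph.ConnectedComponent.eq.mpr hxy.reachable]
  have image_equiv : Equivalence fun X Y : Set W =>
      Gl.connectedComponentMk '' X = Gl.connectedComponentMk '' Y :=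
    ⟨fun _ => rfl, Eq.symm, Eq.trans⟩
  refine ⟨c, Set.Subset.antisymm ?_ ?_⟩
  · rintro _ ⟨u, ⟨X, ⟨-, hX⟩, hu⟩, rfl⟩
    rw [← hc, image_equiv.eqvGen_iff.mp (Relation.EqvGen.mono linked_image_eq _ _ hX)]
    exact Set.mem_image_of_mem _ hu
  · rw [← hc]
    exact Set.image_mono (Set.subset_sUnion_of_mem ⟨hU₀, Relation.EqvGen.refl _⟩)

theorem exists_image_eq_singleton_of_mem_partAt (hσ : 1 ≤ σ) (t : ℕ) :
    ∀ U ∈ partAt Gp Gl σ τ ⊤ t, ∃ c, Gl.connectedComponentMk '' U = {c} := by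
  induction t with
  | zero =>
    rintro _ ⟨v, rfl⟩
    exact ⟨_, Set.image_singleton⟩
  | succ t ih =>
    rw [partAt_succ]
    exact exists_image_eq_singleton_of_mem_step hσ ih

theorem Solve.connected (hσ : 1 ≤ σ) (h : Solve Gp Gl σ τ ⊤) : Gl.Connected := by
  obtain ⟨t, ht⟩ := h
  obtain ⟨c, hc⟩ := exists_image_eq_singleton_of_mem_partAt hσ t Set.univ (by rw [ht]; rfl)
  obtain ⟨v, -, rfl⟩ : c ∈ Gl.connectedComponentMk '' Set.univ := hc ▸ rfl
  refine (SimpleGraph.connected_iff_exists_forall_reachable Gl).mpr ⟨v, fun w => ?_⟩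
  exact SimpleGraph.ConnectedComponent.exact (hc.subset (Set.mem_image_of_mem _ trivial)).symm

theorem solve_of_subsingleton [Nonempty W] [Subsingleton W] (Gp Gl : SimpleGraph W) (σ τ : ℕ)
    (θ : ℕ∞) : Solve Gp Gl σ τ θ := by
  refine ⟨0, Set.ext fun S => ⟨?_, ?_⟩⟩
  · rintro ⟨v, rfl⟩
    exact Set.eq_univ_of_forall fun w => Subsingleton.elim w v
  · rintro rfl
    obtain ⟨v⟩ := ‹Nonempty W›
    exact ⟨v, (Set.eq_univ_of_forall fun w => Subsingleton.elim w v).symm⟩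

end Dynamics

section PeopleGraph

open Finset

variable {α β : Type*}

def offDiagEmbedding (f : α ↪ β) : {e : Sym2 α // ¬ e.IsDiag} ↪ {e : Sym2 β // ¬ e.IsDiag} :=
  f.sym2Map.subtypeMap fun e he => by
    rwa [Function.Embedding.sym2Map_apply, Sym2.isDiag_map f.injective]

theorem comap_graphOf (f : α ↪ β) (ω : {e : Sym2 β // ¬ e.IsDiag} → Bool) :
    (graphOf ω).comap f = graphOf (ω ∘ offDiagEmbedding f) := by
  ext x y
  simp [graphOf, offDiagEmbedding, Function.Embedding.subtypeMap, Subtype.map]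

theorem card_edgeSet_graphOf [Fintype α] (ω : {e : Sym2 α // ¬ e.IsDiag} → Bool) :
    Nat.card (graphOf ω).edgeSet = #{e | ω e = true} := by
  have : (graphOf ω).edgeSet = Subtype.val '' {e | ω e = true} := by
    ext e
    simp [graphOf]
  rw [this, Nat.card_coe_set_eq, Set.ncard_image_of_injective _ Subtype.val_injective,
    ← Finset.coe_filter_univ, Set.ncard_coe_finset]

def pairsIn [Fintype V] (A : Set V) : Finset {e : Sym2 V // ¬ e.IsDiag} :=
  univ.map (offDiagEmbedding (Function.Embedding.subtype (· ∈ A)))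

theorem card_pairsIn [Fintype V] (A : Set V) : #(pairsIn A) = A.ncard.choose 2 := by
  rw [pairsIn, card_map, card_univ, Sym2.card_subtype_not_diag, ← Nat.card_eq_fintype_card,
    Nat.card_coe_set_eq]

theorem SolveIn.ncard_sub_one_le [Fintype V] {Gpuz : SimpleGraph V} {σ τ : ℕ} (hσ : 1 ≤ σ)
    {A : Set V} {ω : {e : Sym2 V // ¬ e.IsDiag} → Bool}
    (h : SolveIn Gpuz (graphOf ω) σ τ ⊤ A) : A.ncard - 1 ≤ #{e ∈ pairsIn A | ω e = true} := by
  have hconn := Solve.connected hσ h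
  rw [SimpleGraph.induce, comap_graphOf] at hconn
  have hedges := hconn.card_vert_le_card_edgeSet_add_one
  rw [card_edgeSet_graphOf, Nat.card_coe_set_eq] at hedges
  rw [pairsIn, filter_map, card_map]
  convert Nat.sub_le_of_le_add hedges using 2
  ext
  simp

end PeopleGraph

section Bernoulli

open Finset

-- `DecidableEq E` is a binder, not classical, so that the `Fintype (E → Bool)` instance matches
-- the one in `erProb`.
variable {E : Type*} [Fintype E] [DecidableEq E]

theorem sum_prod_bernoulli_mul_pow_card (p c : ℝ) (S : Finset E) :
    ∑ ω : E → Bool, (∏ e, if ω e then p else 1 - p) * c ^ #{e ∈ S | ω e = true} =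
      (1 - p + p * c) ^ #S := by
  set f : E → Bool → ℝ := fun e b => (if b then p else 1 - p) * if e ∈ S ∧ b then c else 1
  have tilt : ∀ ω : E → Bool,
      (∏ e, if ω e then p else 1 - p) * c ^ #{e ∈ S | ω e = true} = ∏ e, f e (ω e) := by
    intro ω
    rw [prod_mul_distrib, ← prod_const, ← Fintype.prod_ite_mem {e ∈ S | ω e = true}]
    simp only [mem_filter]
  have factor : ∀ e, ∑ b, f e b = if e ∈ S then 1 - p + p * c else 1 := by
    intro e
    by_cases he : e ∈ S
    · simp [f, he]
      ring
    · simp [f, he]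
  simp_rw [tilt, ← Fintype.prod_sum f, factor, Fintype.prod_ite_mem, prod_const]

theorem sum_bernoulli_le_of_le_card {p c : ℝ} (hp0 : 0 ≤ p) (hp1 : p ≤ 1) (hc : 1 ≤ c)
    (S : Finset E) (k : ℕ) (Q : (E → Bool) → Prop)
    (hQ : ∀ ω, Q ω → k ≤ #{e ∈ S | ω e = true}) :
    ∑ ω : E → Bool, (if Q ω then ∏ e, (if ω e then p else 1 - p) else 0) ≤
      (1 - p + p * c) ^ #S / c ^ k := by
  rw [le_div_iff₀ (pow_pos (by linarith) k), ← sum_prod_bernoulli_mul_pow_card, sum_mul]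
  refine sum_le_sum fun ω _ => ?_
  have hw : 0 ≤ ∏ e, if ω e then p else 1 - p :=
    prod_nonneg fun e _ => by split_ifs <;> linarith
  split_ifs with hω
  · exact mul_le_mul_of_nonneg_left (pow_le_pow_right₀ hc (hQ ω hω)) hw
  · rw [zero_mul]
    exact mul_nonneg hw (pow_nonneg (by linarith) _)

end Bernoulli

theorem erProb_eq_zero [Fintype V] {Q : SimpleGraph V → Prop} (p : ℝ) (h : ∀ G, ¬ Q G) :
    erProb p Q = 0 :=
  Finset.sum_eq_zero fun _ _ => if_neg (h _)

theorem erProb_eq_one [Fintype V] {Q : SimpleGraph V → Prop} (p : ℝ) (h : ∀ G, Q G) :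
    erProb p Q = 1 := by
  have := sum_prod_bernoulli_mul_pow_card (E := {e : Sym2 V // ¬ e.IsDiag}) p 1 ∅
  simp only [one_pow, mul_one, Finset.card_empty, pow_zero] at this
  unfold erProb
  simpa only [h, if_true] using this

theorem chernoff_exponent_le {n : ℕ} (hn : 1 ≤ n) {p q : ℝ} (hp : 0 ≤ p) (hq0 : 0 < q)
    (hq1 : q ≤ 1) (hnp : n * p ≤ 2 * q) :
    (1 - p + p * q⁻¹) ^ n.choose 2 / q⁻¹ ^ (n - 1) ≤ q⁻¹ * (q * Real.exp (1 - q)) ^ n := by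
  obtain ⟨m, rfl⟩ : ∃ m, n = m + 1 := ⟨n - 1, by omega⟩
  have hqinv : 1 ≤ q⁻¹ := (one_le_inv₀ hq0).mpr hq1
  have hbase : 1 - p + p * q⁻¹ ≤ Real.exp (p * (q⁻¹ - 1)) := by
    linarith [Real.add_one_le_exp (p * (q⁻¹ - 1))]
  have hexponent : ((m + 1).choose 2 : ℝ) * (p * (q⁻¹ - 1)) ≤ m * (1 - q) := by
    rw [Nat.cast_choose_two]
    push_cast at hnp ⊢
    calc (m + 1 : ℝ) * (m + 1 - 1) / 2 * (p * (q⁻¹ - 1))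
        = m / 2 * ((m + 1) * p) * (q⁻¹ - 1) := by ring
      _ ≤ m / 2 * (2 * q) * (q⁻¹ - 1) := by gcongr
      _ = m * (1 - q) := by field_simp
  calc (1 - p + p * q⁻¹) ^ (m + 1).choose 2 / q⁻¹ ^ (m + 1 - 1)
      = (1 - p + p * q⁻¹) ^ (m + 1).choose 2 * q ^ m := by simp
    _ ≤ Real.exp (p * (q⁻¹ - 1)) ^ (m + 1).choose 2 * q ^ m := by
        gcongr
        nlinarith
    _ ≤ Real.exp (m * (1 - q)) * q ^ m := by
        rw [← Real.exp_nat_mul]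
        gcongr
    _ = (q * Real.exp (1 - q)) ^ m := by rw [Real.exp_nat_mul, mul_pow, mul_comm]
    _ ≤ (q * Real.exp (1 - q)) ^ m * Real.exp (1 - q) :=
        le_mul_of_one_le_right (by positivity) (Real.one_le_exp (by linarith))
    _ = q⁻¹ * (q * Real.exp (1 - q)) ^ (m + 1) := by
        rw [pow_succ]
        field_simp

theorem erProb_solveIn_le [Fintype V] (Gpuz : SimpleGraph V) (A : Set V) {σ τ : ℕ}
    (hσ : 1 ≤ σ) {p q : ℝ} (hp : 0 ≤ p) (hq0 : 0 < q) (hq1 : q ≤ 1)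
    (hnp : A.ncard * p ≤ 2 * q) :
    erProb p (fun G => SolveIn Gpuz G σ τ ⊤ A) ≤ q⁻¹ * (q * Real.exp (1 - q)) ^ A.ncard := by
  obtain hA | hA | hA : A.ncard = 0 ∨ A.ncard = 1 ∨ 2 ≤ A.ncard := by omega
  · rw [erProb_eq_zero p fun G hG => ?_]
    · positivity
    have : Nonempty A := (Solve.connected hσ hG).nonempty
    exact Set.nonempty_coe_sort.mp this |>.ne_empty ((Set.ncard_eq_zero A.toFinite).mp hA)
  · obtain ⟨v, rfl⟩ := Set.ncard_eq_one.mp hA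
    rw [erProb_eq_one (Q := fun G => SolveIn Gpuz G σ τ ⊤ {v}) p
        fun G => solve_of_subsingleton _ _ _ _ _, Set.ncard_singleton, pow_one,
      ← mul_assoc, inv_mul_cancel₀ hq0.ne', one_mul]
    exact Real.one_le_exp (by linarith)
  · have hp1 : p ≤ 1 := by
      have : (2 : ℝ) ≤ A.ncard := by exact_mod_cast hA
      nlinarith
    have chernoff := sum_bernoulli_le_of_le_card hp hp1 ((one_le_inv₀ hq0).mpr hq1) (pairsIn A)
      (A.ncard - 1) (fun ω => SolveIn Gpuz (graphOf ω) σ τ ⊤ A)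
      fun ω hω => hω.ncard_sub_one_le hσ
    rw [card_pairsIn] at chernoff
    exact chernoff.trans <| chernoff_exponent_le (by omega) hp hq0 hq1 hnp

theorem stmt15_general {V : Type*} [Fintype V] (Gpuz : SimpleGraph V) (hconn : Gpuz.Connected)
    (D : ℕ) (hD : 1 ≤ D)
    (α μ : ℝ) (hα : 0 < α) (hμ0 : 0 < μ) (hμ : μ < 2 * D / α)
    (A : Set V) (hA : (A.ncard : ℝ) = α * Real.log (Fintype.card V)) :
    erProb (μ / (D * Real.log (Fintype.card V)))
        (fun Gppl => SolveIn Gpuz Gppl 1 1 ⊤ A) ≤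
      2 * D / (α * μ) *
        (Fintype.card V : ℝ) ^
          (α * (1 - α * μ / (2 * D) - Real.log (2 * D / (α * μ)))) := by
  have hN : (0 : ℝ) < Fintype.card V := by
    have := hconn.nonempty
    exact_mod_cast Fintype.card_pos
  set q := α * μ / (2 * D) with hq
  have hD0 : (0 : ℝ) < D := by exact_mod_cast hD
  have hq0 : 0 < q := by positivity
  have hq1 : q ≤ 1 := by
    rw [lt_div_iff₀ hα] at hμ
    rw [div_le_one (by positivity)]
    linarith
  have hp : 0 ≤ μ / (D * Real.log (Fintype.card V)) :=
    div_nonneg hμ0.le (mul_nonneg hD0.le (Real.log_natCast_nonneg _))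
  have hnp : A.ncard * (μ / (D * Real.log (Fintype.card V))) ≤ 2 * q := by
    calc (A.ncard : ℝ) * (μ / (D * Real.log (Fintype.card V)))
        = 2 * q * (Real.log (Fintype.card V) / Real.log (Fintype.card V)) := by rw [hA, hq]; ring
      _ ≤ 2 * q := mul_le_of_le_one_right (by positivity) (div_self_le_one _)
  have hRHS : 2 * D / (α * μ) * (Fintype.card V : ℝ) ^ (α * (1 - q - Real.log (2 * D / (α * μ))))
      = q⁻¹ * (q * Real.exp (1 - q)) ^ A.ncard := by
    have hbase : q * Real.exp (1 - q) = Real.exp (1 - q + Real.log q) := by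
      rw [Real.exp_add, Real.exp_log hq0, mul_comm]
    rw [hq, ← inv_div, Real.log_inv, Real.rpow_def_of_pos hN, ← hq, hbase, ← Real.exp_nat_mul, hA]
    congr 2
    ring
  rw [hRHS]
  exact erProb_solveIn_le Gpuz A le_rfl hp hq0 hq1 hnp

/-- Lemma 3.2: for AE jigsaw percolation on a connected puzzle graph
with `N` vertices and maximum degree at most `D`, with `p = μ/(D log N)` and
`0 < μ < 2D/α`, any `A` with `|A| = α log N` inducing a connected puzzle subgraph
satisfies `P_p(Solve_A) ≤ (2D/(αμ)) N^{α(1 - αμ/(2D) - log(2D/(αμ)))}`. -/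
theorem stmt15 {V : Type*} [Fintype V] (Gpuz : SimpleGraph V) (hconn : Gpuz.Connected)
    (D : ℕ) (hD : 1 ≤ D) (hdeg : ∀ v : V, (Gpuz.neighborSet v).ncard ≤ D)
    (α μ : ℝ) (hα : 0 < α) (hμ0 : 0 < μ) (hμ : μ < 2 * D / α)
    (A : Set V) (hA : (A.ncard : ℝ) = α * Real.log (Fintype.card V))
    (hAconn : (Gpuz.induce A).Connected) :
    erProb (μ / (D * Real.log (Fintype.card V)))
        (fun Gppl => SolveIn Gpuz Gppl 1 1 ⊤ A) ≤
      2 * D / (α * μ) *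
        (Fintype.card V : ℝ) ^
          (α * (1 - α * μ / (2 * D) - Real.log (2 * D / (α * μ)))) :=
  stmt15_general Gpuz hconn D hD α μ hα hμ0 hμ A hA

end JigsawPerc
end
end

section
/- For every integer σ ≥ 1, the function g_σ(x) = −log P(Poisson(x) ≥ σ) = −log(e^{−x} Σ_{i=σ}^∞ x^i/i!) is positive, decreasing, and convex on (0, ∞). -/
/-!
With `T(x) = ∑_{i ≥ σ} x^i / i!` we have `g_σ(x) = x - log T(x)`. Since the partial sum
`∑_{i < σ} x^i / i!` is at least `1`, `T(x) < eˣ` and `g_σ > 0`. Differentiating the tail of the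
exponential series shifts it by one index, so `g_σ' = -(x^{σ-1} / T(x)) / (σ-1)! < 0`. Finally
`T(x) / x^{σ-1} = ∑_i x^{i+1} / (σ+i)!` is increasing, so `g_σ'` is increasing and `g_σ` is convex.
-/

open scoped Classical
open Filter

noncomputable section

namespace JigsawPerc

variable {V : Type*}

open Real Set
open scoped Nat

def expTail (σ : ℕ) (x : ℝ) : ℝ := ∑' i : ℕ, x ^ (σ + i) / (σ + i)!

lemma hasSum_expTail (σ : ℕ) (x : ℝ) :
    HasSum (fun i : ℕ => x ^ (σ + i) / (σ + i)!)
      (exp x - ∑ n ∈ Finset.range σ, x ^ n / n !) := by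
  have hexp : HasSum (fun n : ℕ => x ^ n / n !) (exp x) := by
    rw [Real.exp_eq_exp_ℝ]
    exact NormedSpace.expSeries_div_hasSum_exp x
  simpa only [add_comm σ] using (hasSum_nat_add_iff' σ).2 hexp

lemma expTail_eq (σ : ℕ) (x : ℝ) :
    expTail σ x = exp x - ∑ n ∈ Finset.range σ, x ^ n / n ! :=
  (hasSum_expTail σ x).tsum_eq

lemma expTail_eq_add_expTail_succ (m : ℕ) (x : ℝ) :
    expTail m x = x ^ m / m ! + expTail (m + 1) x := by
  rw [expTail_eq, expTail_eq, Finset.sum_range_succ]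
  ring

lemma expTail_pos (σ : ℕ) {x : ℝ} (hx : 0 < x) : 0 < expTail σ x :=
  (hasSum_expTail σ x).summable.tsum_pos (fun i => by positivity) 0 (by positivity)

lemma expTail_succ_lt_exp (m : ℕ) {x : ℝ} (hx : 0 ≤ x) : expTail (m + 1) x < exp x := by
  have hsum : 0 < ∑ n ∈ Finset.range (m + 1), x ^ n / n ! :=
    Finset.sum_pos' (fun n _ => by positivity) ⟨0, by simp⟩
  rw [expTail_eq]
  linarith

lemma hasDerivAt_pow_succ_div_factorial (n : ℕ) (x : ℝ) :
    HasDerivAt (fun y : ℝ => y ^ (n + 1) / (n + 1)!) (x ^ n / n !) x := by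
  refine ((hasDerivAt_pow (n + 1) x).div_const _).congr_deriv ?_
  rw [Nat.factorial_succ]
  push_cast
  field_simp

lemma hasDerivAt_sum_range_succ_pow_div_factorial (m : ℕ) (x : ℝ) :
    HasDerivAt (fun y : ℝ => ∑ n ∈ Finset.range (m + 1), y ^ n / n !)
      (∑ n ∈ Finset.range m, x ^ n / n !) x := by
  simp_rw [Finset.sum_range_succ']
  simpa using (HasDerivAt.sum fun n _ => hasDerivAt_pow_succ_div_factorial n x).add_const 1

lemma hasDerivAt_expTail_succ (m : ℕ) (x : ℝ) :
    HasDerivAt (expTail (m + 1)) (expTail m x) x := by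
  rw [show expTail (m + 1) = fun y => exp y - ∑ n ∈ Finset.range (m + 1), y ^ n / n ! from
    funext (expTail_eq _), expTail_eq]
  exact (hasDerivAt_exp x).sub (hasDerivAt_sum_range_succ_pow_div_factorial m x)

lemma poissonTail_pos (σ : ℕ) {x : ℝ} (hx : 0 < x) : 0 < poissonTail σ x :=
  mul_pos (exp_pos _) (expTail_pos σ hx)

lemma poissonTail_succ_lt_one (m : ℕ) {x : ℝ} (hx : 0 ≤ x) : poissonTail (m + 1) x < 1 := by
  rw [poissonTail, ← expTail, exp_neg, inv_mul_lt_one₀ (exp_pos x)]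
  exact expTail_succ_lt_exp m hx

lemma gPois_succ_pos (m : ℕ) {x : ℝ} (hx : 0 < x) : 0 < gPois (m + 1) x :=
  neg_pos.2 (log_neg (poissonTail_pos _ hx) (poissonTail_succ_lt_one m hx.le))

/-- `d/dx P(Poisson(x) ≥ m + 1) = P(Poisson(x) = m)`. -/
lemma hasDerivAt_poissonTail_succ (m : ℕ) (x : ℝ) :
    HasDerivAt (poissonTail (m + 1)) (exp (-x) * (x ^ m / m !)) x := by
  have h := ((hasDerivAt_neg x).exp).mul (hasDerivAt_expTail_succ m x)
  refine h.congr_deriv ?_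
  rw [expTail_eq_add_expTail_succ m x]
  ring

lemma hasDerivAt_gPois_succ (m : ℕ) {x : ℝ} (hx : 0 < x) :
    HasDerivAt (gPois (m + 1)) (-(x ^ m / expTail (m + 1) x / m !)) x := by
  have h := ((hasDerivAt_poissonTail_succ m x).log (poissonTail_pos _ hx).ne').neg
  refine h.congr_deriv ?_
  rw [poissonTail, ← expTail]
  field_simp

lemma monotoneOn_expTail_succ_div_pow (m : ℕ) :
    MonotoneOn (fun x => expTail (m + 1) x / x ^ m) (Ioi 0) := by
  intro x (hx : 0 < x) y (hy : 0 < y) hxy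
  have term_eq : ∀ {z : ℝ}, 0 < z → ∀ i : ℕ,
      z ^ (m + 1 + i) / (m + 1 + i)! / z ^ m = z ^ (i + 1) / (m + 1 + i)! := fun hz i => by
    rw [show m + 1 + i = m + (i + 1) by omega, pow_add]
    field_simp
  simp only [expTail, ← tsum_div_const]
  refine Summable.tsum_le_tsum (fun i => ?_) ((hasSum_expTail _ x).summable.div_const _)
    ((hasSum_expTail _ y).summable.div_const _)
  rw [term_eq hx, term_eq hy]
  gcongr

lemma antitoneOn_pow_div_expTail_succ (m : ℕ) :
    AntitoneOn (fun x => x ^ m / expTail (m + 1) x) (Ioi 0) := by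
  intro x (hx : 0 < x) y hy hxy
  dsimp only
  rw [← inv_div (expTail _ y), ← inv_div (expTail _ x)]
  exact inv_anti₀ (div_pos (expTail_pos _ hx) (pow_pos hx m))
    (monotoneOn_expTail_succ_div_pow m hx hy hxy)

/-- Lemma 5.1: for every `σ ≥ 1` the function
`g_σ(x) = −log(e^{−x} Σ_{i=σ}^∞ x^i/i!)` is positive, (strictly) decreasing and convex
on `(0, ∞)`. -/
theorem stmt16 (σ : ℕ) (hσ : 1 ≤ σ) :
    (∀ x : ℝ, 0 < x → 0 < gPois σ x) ∧
    StrictAntiOn (gPois σ) (Set.Ioi 0) ∧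
    ConvexOn ℝ (Set.Ioi 0) (gPois σ) := by
  obtain ⟨m, rfl⟩ := Nat.exists_eq_add_of_le' hσ
  have hcont : ContinuousOn (gPois (m + 1)) (Ioi 0) := fun _ hx =>
    (hasDerivAt_gPois_succ m hx).continuousAt.continuousWithinAt
  refine ⟨fun x hx => gPois_succ_pos m hx, ?_, ?_⟩
  · refine strictAntiOn_of_deriv_neg (convex_Ioi 0) hcont fun x hx => ?_
    rw [interior_Ioi] at hx
    rw [(hasDerivAt_gPois_succ m hx).deriv, neg_neg_iff_pos]
    exact div_pos (div_pos (pow_pos hx m) (expTail_pos _ hx)) (by positivity)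
  · refine MonotoneOn.convexOn_of_deriv (convex_Ioi 0) hcont ?_ ?_ <;> rw [interior_Ioi]
    · exact fun x hx => (hasDerivAt_gPois_succ m hx).differentiableAt.differentiableWithinAt
    · intro x hx y hy hxy
      rw [(hasDerivAt_gPois_succ m hx).deriv, (hasDerivAt_gPois_succ m hy).deriv, neg_le_neg_iff]
      exact div_le_div_of_nonneg_right (antitoneOn_pow_div_expTail_succ m hx hy hxy)
        (by positivity)

end JigsawPerc
end
end

section
/- Let T be a tree with N ≥ 2 vertices (hence N − 1 edges), and replace each edge by two oppositely oriented edges, giving 2(N − 1) oriented edges. Then: (i) there is an oriented closed walk that uses each of the 2(N − 1) oriented edges exactly once; and (ii) for any integer L with 1 ≤ L ≤ N − 1, there exist ⌈(N − 1)/(2L²)⌉ segments (stretches of consecutive oriented edges) of this closed walk such that (1) the set of undirected edges underlying each segment has cardinality exactly L, (2) the underlying undirected edge sets of any two distinct segments are disjoint, and (3) the vertex sets of any two distinct segments intersect in at most one vertex. -/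
open scoped Classical
open Filter

noncomputable section

namespace JigsawPerc

variable {V : Type*}

/-- The set of undirected edges underlying the segment of `m` consecutive oriented edges
of the closed walk `c`, starting at position `a`. -/
def segEdges {V : Type*} {E : ℕ} (c : ZMod E → V × V) (a : ZMod E) (m : ℕ) :
    Set (Sym2 V) :=
  {e | ∃ j < m, e = s((c (a + (j : ZMod E))).1, (c (a + (j : ZMod E))).2)}

/-- The set of vertices incident to the edges of the segment of `m` consecutive oriented
edges of the closed walk `c`, starting at position `a`. -/
def segVerts {V : Type*} {E : ℕ} (c : ZMod E → V × V) (a : ZMod E) (m : ℕ) : Set V :=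
  {v | ∃ j < m, v = (c (a + (j : ZMod E))).1 ∨ v = (c (a + (j : ZMod E))).2}

/-! Growing the visited vertex set along a boundary edge `u → w` and splicing the detour
`u → w → u` into the closed walk gives, in any connected graph, a closed walk of length
`2 (N - 1)` repeating no oriented edge; in a tree this is every oriented edge.

Each undirected edge then occurs twice around the walk, so `2L - 1` consecutive positions carry
at least `L` edges, and as the count grows by at most one per step some initial piece carries
exactly `L`. Cut the walk into `⌊2(N - 1)/(2L - 1)⌋` blocks and take such a piece in each: a
piece meets at most `L` others, since each of its edges has only one other occurrence, so a
greedy independent set of this conflict graph has at least `⌈(N - 1)/(2L²)⌉` pieces. Two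
vertices lying in two edge-disjoint pieces are joined by a path inside each of them, and paths in
a tree are unique, so they coincide. -/

end JigsawPerc

namespace SimpleGraph

variable {V : Type*} {G : SimpleGraph V}

theorem Walk.exists_darts_nodup_extend_of_notMem_support (hG : G.Connected) {x v : V}
    (p : G.Walk x x) (hp : p.darts.Nodup) (hv : v ∉ p.support) :
    ∃ q : G.Walk x x, q.darts.Nodup ∧ q.length = p.length + 2 ∧
      q.support.toFinset.card = p.support.toFinset.card + 1 := by
  obtain ⟨d, -, hu, hw⟩ := (hG.preconnected x v).some.exists_boundary_dart
    {y | y ∈ p.support} p.start_mem_support hv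
  set u := d.fst
  set w := d.snd
  have hsplit := p.take_spec hu
  set q := (p.takeUntil u hu).append (cons d.adj (cons d.adj.symm (p.dropUntil u hu)))
  have hdarts : q.darts.Perm (d :: d.symm :: p.darts) := by
    conv_rhs => rw [← hsplit]
    simp only [q, darts_append, darts_cons]
    exact List.perm_middle.trans (List.Perm.cons _ List.perm_middle)
  have hsupp : q.support.toFinset = insert w p.support.toFinset := by
    ext y
    conv_rhs => rw [← hsplit]
    simp only [q, List.mem_toFinset, Finset.mem_insert, mem_support_append_iff, support_cons,
      List.mem_cons]
    have := (p.dropUntil u hu).start_mem_support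
    have := (p.takeUntil u hu).end_mem_support
    grind
  refine ⟨q, (hdarts.nodup_iff).2 ?_, ?_, ?_⟩
  · refine List.nodup_cons.2 ⟨?_, List.nodup_cons.2 ⟨fun h => hw ?_, hp⟩⟩
    · rw [List.mem_cons, not_or]
      exact ⟨d.symm_ne.symm, fun h => hw (p.dart_snd_mem_support_of_mem_darts h)⟩
    · exact p.dart_fst_mem_support_of_mem_darts h
  · rw [← hsplit]
    simp only [q, length_append, length_cons]
    omega
  · rw [hsupp, Finset.card_insert_of_notMem (by simpa using hw)]

theorem Connected.exists_walk_darts_nodup [Fintype V] (hG : G.Connected) :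
    ∃ (x : V) (p : G.Walk x x), p.darts.Nodup ∧ p.length = 2 * (Fintype.card V - 1) := by
  have key : ∀ k < Fintype.card V, ∃ (x : V) (p : G.Walk x x),
      p.darts.Nodup ∧ p.length = 2 * k ∧ p.support.toFinset.card = k + 1 := by
    intro k hk
    induction k with
    | zero =>
      obtain ⟨x⟩ := hG.nonempty
      exact ⟨x, .nil, by simp⟩
    | succ k ih =>
      obtain ⟨x, p, hp, hlen, hcard⟩ := ih (by omega)
      obtain ⟨v, hv⟩ : ∃ v, v ∉ p.support := by
        by_contra! h
        have : p.support.toFinset = Finset.univ := Finset.eq_univ_of_forall (by simpa using h)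
        rw [this, Finset.card_univ] at hcard
        omega
      obtain ⟨q, hq, hqlen, hqcard⟩ := p.exists_darts_nodup_extend_of_notMem_support hG hp hv
      exact ⟨x, q, hq, by omega, by omega⟩
  have := hG.nonempty
  obtain ⟨x, p, hp, hlen, -⟩ := key _ (Nat.sub_lt Fintype.card_pos one_pos)
  exact ⟨x, p, hp, hlen⟩

theorem IsTree.exists_walk_darts_nodup_forall_mem [Fintype V] (hG : G.IsTree) :
    ∃ (x : V) (p : G.Walk x x), p.darts.Nodup ∧ (∀ d, d ∈ p.darts) ∧
      p.length = 2 * (Fintype.card V - 1) := by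
  obtain ⟨x, p, hp, hlen⟩ := hG.connected.exists_walk_darts_nodup
  refine ⟨x, p, hp, fun d => ?_, hlen⟩
  have : p.darts.toFinset = Finset.univ := by
    refine Finset.eq_univ_of_card _ ?_
    rw [List.toFinset_card_of_nodup hp, Walk.length_darts, hlen, dart_card_eq_twice_card_edges,
      ← hG.card_edgeFinset]
    simp
  rw [← List.mem_toFinset, this]
  exact Finset.mem_univ d

namespace Walk

def cyclicDart {x : V} (p : G.Walk x x) (E : ℕ) (i : ZMod E) : V × V :=
  (p.getVert i.val, p.getVert (i.val + 1))

variable {x : V} (p : G.Walk x x) {E : ℕ} [NeZero E]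

theorem cyclicDart_eq_darts_getElem (hE : p.length = E) (i : ZMod E) :
    p.cyclicDart E i = (p.darts[i.val]'(by simpa [hE] using i.val_lt)).toProd := by
  rw [darts_getElem_eq_getVert]
  rfl

theorem adj_cyclicDart (hE : p.length = E) (i : ZMod E) :
    G.Adj (p.cyclicDart E i).1 (p.cyclicDart E i).2 :=
  p.adj_getVert_succ (hE ▸ i.val_lt)

theorem cyclicDart_snd (hE : p.length = E) (i : ZMod E) :
    (p.cyclicDart E i).2 = (p.cyclicDart E (i + 1)).1 := by
  have hval : (i + 1).val = (i.val + 1) % E := by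
    rw [← ZMod.val_natCast, Nat.cast_add, ZMod.natCast_zmod_val, Nat.cast_one]
  simp only [cyclicDart, hval]
  rcases (show i.val + 1 ≤ E from i.val_lt).lt_or_eq with h | h
  · rw [Nat.mod_eq_of_lt h]
  · rw [h, Nat.mod_self, p.getVert_zero, p.getVert_of_length_le hE.le]

theorem cyclicDart_injective (hE : p.length = E) (hp : p.darts.Nodup) :
    Function.Injective (p.cyclicDart E) := by
  intro i j hij
  rw [cyclicDart_eq_darts_getElem p hE, cyclicDart_eq_darts_getElem p hE] at hij
  exact ZMod.val_injective _ ((hp.getElem_inj_iff).1 (Dart.ext _ _ hij))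

theorem exists_cyclicDart_eq (hE : p.length = E) {d : G.Dart} (hd : d ∈ p.darts) :
    ∃ i, p.cyclicDart E i = d.toProd := by
  obtain ⟨k, hk, rfl⟩ := List.getElem_of_mem hd
  have hkE : k < E := by simpa [hE] using hk
  refine ⟨k, ?_⟩
  simp only [cyclicDart_eq_darts_getElem p hE, ZMod.val_cast_of_lt hkE]

end Walk

open Finset in
theorem exists_isIndepSet_subset_card_le_mul [Fintype V] [DecidableRel G.Adj]
    (s : Finset V) : ∃ t ⊆ s, G.IsIndepSet t ∧ #s ≤ (G.maxDegree + 1) * #t := by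
  induction s using Finset.strongInduction with | H s ih =>
  obtain rfl | ⟨v, hv⟩ := s.eq_empty_or_nonempty
  · exact ⟨∅, subset_refl _, by simp [IsIndepSet]⟩
  set N := insert v (G.neighborFinset v)
  have hsub : s \ N ⊂ s :=
    ⟨sdiff_subset, fun h => (mem_sdiff.1 (h hv)).2 (mem_insert_self v _)⟩
  obtain ⟨t, hts, ht, hcard⟩ := ih (s \ N) hsub
  have hvt : v ∉ t := fun h => by simpa [N] using hts h
  refine ⟨insert v t, insert_subset hv (hts.trans sdiff_subset), ?_, ?_⟩
  · rw [coe_insert, IsIndepSet, Set.pairwise_insert]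
    refine ⟨ht, fun w hw _ => ?_⟩
    have hwN : w ∉ N := (mem_sdiff.1 (hts hw)).2
    have : ¬G.Adj v w := fun h => hwN (mem_insert_of_mem ((G.mem_neighborFinset v w).2 h))
    exact ⟨this, fun h => this h.symm⟩
  · have hN : #N ≤ G.maxDegree + 1 :=
      (card_insert_le _ _).trans (Nat.add_le_add_right (G.degree_le_maxDegree v) 1)
    have := card_le_card_sdiff_add_card (s := s) (t := N)
    rw [card_insert_of_notMem hvt, mul_add_one]
    omega

theorem IsAcyclic.eq_of_disjoint_edgeSet (hG : G.IsAcyclic) {u v : V} (p q : G.Walk u v)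
    (h : Disjoint p.edgeSet q.edgeSet) : u = v := by
  have hpq : p.bypass = q.bypass :=
    congrArg Subtype.val
      ((hG.subsingleton_path u v).elim ⟨_, p.bypass_isPath⟩ ⟨_, q.bypass_isPath⟩)
  by_contra huv
  obtain ⟨e, he⟩ := List.exists_mem_of_length_pos (p.bypass.length_edges ▸
    Nat.pos_of_ne_zero fun h0 => huv (Walk.eq_of_length_eq_zero h0))
  exact Set.disjoint_left.1 h (p.edges_bypass_subset_edges he)
    (q.edges_bypass_subset_edges (hpq ▸ he))

end SimpleGraph

open Finset in
theorem exists_pairwiseDisjoint_subfamily {ι β : Type*} [Fintype ι]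
    (W : ι → Set β) {L : ℕ} (hfin : ∀ i, (W i).Finite) (hW : ∀ i, (W i).ncard ≤ L)
    (h3 : ∀ e i j k, e ∈ W i → e ∈ W j → e ∈ W k → i = j ∨ i = k ∨ j = k) :
    ∃ t : Finset ι, (t : Set ι).PairwiseDisjoint W ∧ Fintype.card ι ≤ (L + 1) * #t := by
  let G := SimpleGraph.fromRel fun i j => ¬Disjoint (W i) (W j)
  have hdeg : G.maxDegree ≤ L := by
    refine G.maxDegree_le_of_forall_degree_le L fun i => ?_
    have hne : ∀ j ∈ G.neighborFinset i, (W i ∩ W j).Nonempty := fun j hj => by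
      rw [G.mem_neighborFinset, SimpleGraph.fromRel_adj] at hj
      rcases hj.2 with h | h
      · exact Set.not_disjoint_iff_nonempty_inter.1 h
      · exact Set.inter_comm _ _ ▸ Set.not_disjoint_iff_nonempty_inter.1 h
    obtain h | ⟨j₀, hj₀⟩ := (G.neighborFinset i).eq_empty_or_nonempty
    · simp [← G.card_neighborFinset_eq_degree, h]
    have : Nonempty β := ⟨(hne j₀ hj₀).some⟩
    choose! e he using hne
    rw [← G.card_neighborFinset_eq_degree, ← Set.ncard_coe_finset]
    refine (Set.ncard_le_ncard_of_injOn e (fun j hj => (he j hj).1) ?_ (hfin i)).trans (hW i)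
    intro j hj k hk hjk
    have hij := (G.mem_neighborFinset i j).1 hj
    have hik := (G.mem_neighborFinset i k).1 hk
    rcases h3 (e j) i j k (he j hj).1 (he j hj).2 (hjk ▸ (he k hk).2) with h | h | h
    · exact absurd h hij.ne
    · exact absurd h hik.ne
    · exact h
  obtain ⟨t, -, ht, hcard⟩ := G.exists_isIndepSet_subset_card_le_mul univ
  refine ⟨t, fun i hi j hj hij => ?_, ?_⟩
  · by_contra h
    exact ht hi hj hij (by simp [G, hij, h])
  · exact (card_univ (α := ι) ▸ hcard).trans (Nat.mul_le_mul_right _ (by omega))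

theorem mul_pred_div_lt_div {M L : ℕ} (hL : 1 ≤ L) (hLM : L ≤ M) :
    (L + 1) * ((M + 2 * L ^ 2 - 1) / (2 * L ^ 2) - 1) < 2 * M / (2 * L - 1) := by
  have hq : (M + 2 * L ^ 2 - 1) / (2 * L ^ 2) - 1 = (M - 1) / (2 * L ^ 2) := by
    rw [show M + 2 * L ^ 2 - 1 = M - 1 + 2 * L ^ 2 by omega,
      Nat.add_div_right _ (by positivity), Nat.add_sub_cancel]
  have hqM := Nat.div_mul_le_self (M - 1) (2 * L ^ 2)
  rw [hq, Nat.lt_iff_add_one_le, Nat.le_div_iff_mul_le (by omega)]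
  set q := (M - 1) / (2 * L ^ 2)
  obtain ⟨l, rfl⟩ : ∃ l, L = l + 1 := ⟨L - 1, by omega⟩
  rw [show 2 * (l + 1) - 1 = 2 * l + 1 by omega]
  rcases Nat.eq_zero_or_pos q with h | h
  · rw [h]; omega
  · have : q * (2 * (l + 1) ^ 2) + 1 ≤ M := by omega
    nlinarith

namespace JigsawPerc

section Segments

variable {V : Type*} {E : ℕ} (c : ZMod E → V × V)

theorem segEdges_eq_image (a : ZMod E) (m : ℕ) :
    segEdges c a m =
      ↑((Finset.range m).image fun j : ℕ => s((c (a + j)).1, (c (a + j)).2)) := by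
  ext e
  simp [segEdges, eq_comm]

theorem finite_segEdges (a : ZMod E) (m : ℕ) : (segEdges c a m).Finite := by
  rw [segEdges_eq_image]
  exact Finset.finite_toSet _

theorem segEdges_mono (a : ZMod E) {m m' : ℕ} (h : m ≤ m') :
    segEdges c a m ⊆ segEdges c a m' :=
  fun _ ⟨j, hj, he⟩ => ⟨j, hj.trans_le h, he⟩

theorem ncard_segEdges_succ_le (a : ZMod E) (m : ℕ) :
    (segEdges c a (m + 1)).ncard ≤ (segEdges c a m).ncard + 1 := by
  simp only [segEdges_eq_image, Finset.range_add_one, Finset.image_insert, Set.ncard_coe_finset]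
  exact Finset.card_insert_le _ _

theorem ncard_setOf_mk_eq_le_two (hc : Function.Injective c) (e : Sym2 V) :
    {i | s((c i).1, (c i).2) = e}.ncard ≤ 2 := by
  induction e using Sym2.ind with | _ u v =>
  calc {i | s((c i).1, (c i).2) = s(u, v)}.ncard
      = (c '' {i | s((c i).1, (c i).2) = s(u, v)}).ncard := (Set.ncard_image_of_injective _ hc).symm
    _ ≤ ({(u, v), (v, u)} : Set (V × V)).ncard := by
      refine Set.ncard_le_ncard ?_ (Set.toFinite _)
      rintro _ ⟨i, hi, rfl⟩
      simpa [Sym2.eq_iff, Prod.ext_iff, or_comm, and_comm] using hi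
    _ ≤ 2 := (Set.ncard_insert_le _ _).trans (by simp)

theorem le_two_mul_ncard_segEdges [NeZero E] (hc : Function.Injective c) (a : ZMod E) {m : ℕ}
    (hm : m ≤ E) : m ≤ 2 * (segEdges c a m).ncard := by
  rw [segEdges_eq_image, Set.ncard_coe_finset]
  simpa using Finset.card_le_mul_card_image (Finset.range m) 2 fun e _ => by
    rw [← Set.ncard_coe_finset]
    refine le_trans (Set.ncard_le_ncard_of_injOn (fun j : ℕ => a + j) ?_ ?_ (Set.toFinite _))
      (ncard_setOf_mk_eq_le_two c hc e)
    · intro j hj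
      simp only [Finset.coe_filter, Set.mem_ofPred_eq] at hj
      exact hj.2
    · intro j hj k hk hjk
      simp only [Finset.coe_filter, Finset.mem_range, Set.mem_ofPred_eq] at hj hk
      have := congrArg ZMod.val (add_left_cancel hjk)
      rwa [ZMod.val_cast_of_lt (by omega), ZMod.val_cast_of_lt (by omega)] at this

theorem exists_ncard_segEdges_eq [NeZero E] (hc : Function.Injective c) (a : ZMod E) {L : ℕ}
    (hL : 1 ≤ L) (hLE : 2 * L - 1 ≤ E) : ∃ m ≤ 2 * L - 1, (segEdges c a m).ncard = L := by
  have hbig := le_two_mul_ncard_segEdges c hc a hLE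
  have hex : ∃ m, L ≤ (segEdges c a m).ncard := ⟨2 * L - 1, by omega⟩
  refine ⟨Nat.find hex, Nat.find_min' hex (by omega), ?_⟩
  have h0 : Nat.find hex ≠ 0 := fun h => by
    have := h ▸ Nat.find_spec hex
    simp [segEdges_eq_image] at this
    omega
  obtain ⟨k, hk⟩ := Nat.exists_eq_add_one_of_ne_zero h0
  have hlt := Nat.find_min hex (show k < Nat.find hex by omega)
  have hspec := Nat.find_spec hex
  rw [hk] at hspec ⊢
  have := ncard_segEdges_succ_le c a k
  omega

theorem eq_or_eq_or_eq_of_mk_eq [NeZero E] (hc : Function.Injective c) {p q r : ℕ}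
    (hp : p < E) (hq : q < E) (hr : r < E) {e : Sym2 V}
    (hpe : s((c p).1, (c p).2) = e) (hqe : s((c q).1, (c q).2) = e)
    (hre : s((c r).1, (c r).2) = e) : p = q ∨ p = r ∨ q = r := by
  by_contra! h
  have hcast : ∀ {x y : ℕ}, x < E → y < E → x ≠ y → (x : ZMod E) ≠ y :=
    fun hx hy hxy hxy' => hxy <| by
      simpa [ZMod.val_cast_of_lt hx, ZMod.val_cast_of_lt hy] using congrArg ZMod.val hxy'
  have h3 : ({(p : ZMod E), (q : ZMod E), (r : ZMod E)} : Set (ZMod E)).ncard = 3 :=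
    Set.ncard_eq_three.2 ⟨_, _, _, hcast hp hq h.1, hcast hp hr h.2.1, hcast hq hr h.2.2, rfl⟩
  have hsub : ({(p : ZMod E), (q : ZMod E), (r : ZMod E)} : Set (ZMod E)) ⊆
      {i | s((c i).1, (c i).2) = e} := by
    simp [Set.insert_subset_iff, hpe, hqe, hre]
  have := (Set.ncard_le_ncard hsub (Set.toFinite _)).trans (ncard_setOf_mk_eq_le_two c hc e)
  omega

theorem exists_lt_div_eq_of_mem_segEdges {b i m : ℕ} (hm : m ≤ b) (hi : (i + 1) * b ≤ E)
    {e : Sym2 V} (he : e ∈ segEdges c ((i * b : ℕ) : ZMod E) m) :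
    ∃ p < E, p / b = i ∧ s((c p).1, (c p).2) = e := by
  obtain ⟨j, hj, rfl⟩ := he
  refine ⟨i * b + j, ?_, Nat.div_eq_of_lt_le (by omega) ?_, by push_cast; rfl⟩
  · rw [add_one_mul] at hi; omega
  · rw [add_one_mul]; omega

theorem exists_disjoint_segEdges [NeZero E] (hc : Function.Injective c) {L K : ℕ} (hL : 1 ≤ L)
    (hK : (L + 1) * (K - 1) < E / (2 * L - 1)) :
    ∃ (a : Fin K → ZMod E) (m : Fin K → ℕ), (∀ k, (segEdges c (a k) (m k)).ncard = L) ∧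
      ∀ k k', k ≠ k' → Disjoint (segEdges c (a k) (m k)) (segEdges c (a k') (m k')) := by
  set b := 2 * L - 1
  set n := E / b
  have hblock : ∀ i : Fin n, (i + 1) * b ≤ E := fun i =>
    (Nat.mul_le_mul_right b i.isLt).trans (Nat.div_mul_le_self E b)
  choose m hmb hmL using fun i : Fin n =>
    exists_ncard_segEdges_eq c hc ((i * b : ℕ) : ZMod E) hL (by have := hblock i; nlinarith)
  set W := fun i : Fin n => segEdges c ((i * b : ℕ) : ZMod E) (m i)
  obtain ⟨t, ht, hcard⟩ := exists_pairwiseDisjoint_subfamily W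
    (fun i => finite_segEdges c _ _) (fun i => (hmL i).le)
    fun e i j k hi hj hk => by
      obtain ⟨p, hp, hpi, hpe⟩ := exists_lt_div_eq_of_mem_segEdges c (hmb i) (hblock i) hi
      obtain ⟨q, hq, hqj, hqe⟩ := exists_lt_div_eq_of_mem_segEdges c (hmb j) (hblock j) hj
      obtain ⟨r, hr, hrk, hre⟩ := exists_lt_div_eq_of_mem_segEdges c (hmb k) (hblock k) hk
      rcases eq_or_eq_or_eq_of_mk_eq c hc hp hq hr hpe hqe hre with rfl | rfl | rfl
      · exact .inl (Fin.ext (hpi.symm.trans hqj))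
      · exact .inr (.inl (Fin.ext (hpi.symm.trans hrk)))
      · exact .inr (.inr (Fin.ext (hqj.symm.trans hrk)))
  have hKt : K ≤ t.card := by
    rw [Fintype.card_fin] at hcard
    by_contra! h
    have := Nat.mul_le_mul_left (L + 1) (show t.card ≤ K - 1 by omega)
    omega
  obtain ⟨t', ht't, ht'⟩ := Finset.exists_subset_card_eq hKt
  let f := t'.orderEmbOfFin ht'
  refine ⟨fun k => ((f k * b : ℕ) : ZMod E), fun k => m (f k), fun k => hmL _,
    fun k k' hkk' => ?_⟩
  exact ht (ht't (t'.orderEmbOfFin_mem ht' k)) (ht't (t'.orderEmbOfFin_mem ht' k'))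
    (f.injective.ne hkk')

end Segments

variable {V : Type*} {E : ℕ} {G : SimpleGraph V} {c : ZMod E → V × V}

theorem exists_walk_edgeSet_subset_segEdges (hadj : ∀ i, G.Adj (c i).1 (c i).2)
    (hchain : ∀ i, (c i).2 = (c (i + 1)).1) (a : ZMod E) (j : ℕ) :
    ∃ w : G.Walk (c a).1 (c (a + j)).1, w.edgeSet ⊆ segEdges c a j := by
  induction j with
  | zero => exact ⟨SimpleGraph.Walk.nil.copy rfl (by simp), by simp⟩
  | succ j ih =>
    obtain ⟨w, hw⟩ := ih
    refine ⟨(w.concat (hadj _)).copy rfl (by rw [hchain]; push_cast; ring_nf), ?_⟩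
    rw [SimpleGraph.Walk.edgeSet_copy, SimpleGraph.Walk.edgeSet_concat]
    exact Set.insert_subset ⟨j, j.lt_add_one, rfl⟩ (hw.trans (segEdges_mono c a j.le_succ))

theorem exists_walk_of_mem_segVerts (hadj : ∀ i, G.Adj (c i).1 (c i).2)
    (hchain : ∀ i, (c i).2 = (c (i + 1)).1) {a : ZMod E} {m : ℕ} {v : V}
    (hv : v ∈ segVerts c a m) : ∃ w : G.Walk (c a).1 v, w.edgeSet ⊆ segEdges c a m := by
  obtain ⟨j, hj, rfl | rfl⟩ := hv
  · obtain ⟨w, hw⟩ := exists_walk_edgeSet_subset_segEdges hadj hchain a j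
    exact ⟨w, hw.trans (segEdges_mono c a hj.le)⟩
  · obtain ⟨w, hw⟩ := exists_walk_edgeSet_subset_segEdges hadj hchain a (j + 1)
    refine ⟨w.copy rfl (by rw [hchain]; push_cast; ring_nf), ?_⟩
    rw [SimpleGraph.Walk.edgeSet_copy]
    exact hw.trans (segEdges_mono c a hj)

theorem segVerts_inter_subsingleton (hG : G.IsAcyclic) (hadj : ∀ i, G.Adj (c i).1 (c i).2)
    (hchain : ∀ i, (c i).2 = (c (i + 1)).1) {a a' : ZMod E} {m m' : ℕ}
    (hdisj : Disjoint (segEdges c a m) (segEdges c a' m')) :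
    (segVerts c a m ∩ segVerts c a' m').Subsingleton := by
  rintro u ⟨hu, hu'⟩ v ⟨hv, hv'⟩
  obtain ⟨p₁, hp₁⟩ := exists_walk_of_mem_segVerts hadj hchain hu
  obtain ⟨q₁, hq₁⟩ := exists_walk_of_mem_segVerts hadj hchain hv
  obtain ⟨p₂, hp₂⟩ := exists_walk_of_mem_segVerts hadj hchain hu'
  obtain ⟨q₂, hq₂⟩ := exists_walk_of_mem_segVerts hadj hchain hv'
  refine hG.eq_of_disjoint_edgeSet (p₁.reverse.append q₁) (p₂.reverse.append q₂) ?_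
  simp only [SimpleGraph.Walk.edgeSet_append, SimpleGraph.Walk.edgeSet_reverse]
  exact hdisj.mono (Set.union_subset hp₁ hq₁) (Set.union_subset hp₂ hq₂)

/-- Lemma 6.1: a tree with `N ≥ 2` vertices has an oriented closed walk
using each of the `2(N−1)` oriented edges exactly once, and for any `1 ≤ L ≤ N − 1` there
are `⌈(N−1)/(2L²)⌉` segments of this walk whose undirected edge sets each have exactly `L`
elements and are pairwise disjoint, and whose vertex sets pairwise intersect in at most
one vertex. -/
theorem stmt17 {V : Type*} [Fintype V] (T : SimpleGraph V) (hT : T.IsTree)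
    (hN : 2 ≤ Fintype.card V) :
    ∃ c : ZMod (2 * (Fintype.card V - 1)) → V × V,
      (∀ i, T.Adj (c i).1 (c i).2) ∧
      (∀ i, (c i).2 = (c (i + 1)).1) ∧
      Function.Injective c ∧
      (∀ u v : V, T.Adj u v → ∃ i, c i = (u, v)) ∧
      (∀ L : ℕ, 1 ≤ L → L ≤ Fintype.card V - 1 →
        ∃ (a : Fin ((Fintype.card V - 1 + 2 * L ^ 2 - 1) / (2 * L ^ 2)) →
              ZMod (2 * (Fintype.card V - 1)))
          (m : Fin ((Fintype.card V - 1 + 2 * L ^ 2 - 1) / (2 * L ^ 2)) → ℕ),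
          (∀ k, (segEdges c (a k) (m k)).ncard = L) ∧
          (∀ k k', k ≠ k' →
            Disjoint (segEdges c (a k) (m k)) (segEdges c (a k') (m k'))) ∧
          (∀ k k', k ≠ k' →
            (segVerts c (a k) (m k) ∩ segVerts c (a k') (m k')).Subsingleton)) := by
  obtain ⟨x, p, hnodup, hall, hlen⟩ := hT.exists_walk_darts_nodup_forall_mem
  have : NeZero (2 * (Fintype.card V - 1)) := ⟨by omega⟩
  have hadj := p.adj_cyclicDart hlen
  have hchain := p.cyclicDart_snd hlen
  have hinj := p.cyclicDart_injective hlen hnodup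
  refine ⟨p.cyclicDart _, hadj, hchain, hinj,
    fun u v huv => p.exists_cyclicDart_eq hlen (hall ⟨(u, v), huv⟩), fun L hL hLN => ?_⟩
  obtain ⟨a, m, hcard, hdisj⟩ :=
    exists_disjoint_segEdges _ hinj hL (mul_pred_div_lt_div hL hLN)
  exact ⟨a, m, hcard, hdisj, fun k k' hkk' =>
    segVerts_inter_subsingleton hT.isAcyclic hadj hchain (hdisj k k' hkk')⟩

end JigsawPerc
end
end
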